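/- arXiv:2601.08989 — 6 statements merged into one kernel-verified Lean document; each statement's English description precedes it below -/
import Mathlib

section
/- If m and n are both odd integers with m, n ≥ 3, then G(m,n) equals the alternating group on Fin m × Fin n, i.e., G(m,n) consists exactly of the even permutations of Fin m × Fin n. -/
/-!
Every unit rotation is a cycle of odd length, hence even, so `G(m,n)` lies in the alternating
group. Conversely, the rotations of row `0` and column `0` share only the cell `(0,0)`, and their
commutator is the 3-cycle `(0,0) ↦ (0,1) ↦ (1,0)`. Rotations of the rows other than `0` and of the
columns other than `0` and `1` fix `(0,0)` and `(0,1)` but carry `(1,0)` to any other cell, so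
conjugating that commutator yields every 3-cycle through `(0,0)` and `(0,1)`; these generate the
alternating group.
-/

/-- Unit rightward rotation of row `i` of the `m × n` Torus Puzzle. -/
def rowRot (m n : ℕ) (i : Fin m) : Equiv.Perm (Fin m × Fin n) where
  toFun p := if p.1 = i then (i, finRotate n p.2) else p
  invFun p := if p.1 = i then (i, (finRotate n).symm p.2) else p
  left_inv := by rintro ⟨a, b⟩; by_cases h : a = i <;> simp [h, -finRotate_apply, -finRotate_symm_apply]
  right_inv := by rintro ⟨a, b⟩; by_cases h : a = i <;> simp [h, -finRotate_apply, -finRotate_symm_apply]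

/-- Unit downward rotation of column `j` of the `m × n` Torus Puzzle. -/
def colRot (m n : ℕ) (j : Fin n) : Equiv.Perm (Fin m × Fin n) where
  toFun p := if p.2 = j then (finRotate m p.1, j) else p
  invFun p := if p.2 = j then ((finRotate m).symm p.1, j) else p
  left_inv := by rintro ⟨a, b⟩; by_cases h : b = j <;> simp [h, -finRotate_apply, -finRotate_symm_apply]
  right_inv := by rintro ⟨a, b⟩; by_cases h : b = j <;> simp [h, -finRotate_apply, -finRotate_symm_apply]

/-- The set `S(m,n)` of the `m + n` unit rotations. -/
def unitRotations (m n : ℕ) : Set (Equiv.Perm (Fin m × Fin n)) :=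
  Set.range (rowRot m n) ∪ Set.range (colRot m n)

/-- The group `G(m,n)` generated by the unit rotations. -/
def torusGroup (m n : ℕ) : Subgroup (Equiv.Perm (Fin m × Fin n)) :=
  Subgroup.closure (unitRotations m n)


open Equiv Perm
open scoped commutatorElement

section ThreeCycle

variable {α : Type*} [DecidableEq α]

/-- The cycle `x ↦ y ↦ z ↦ x`. -/
def threeCycle (x y z : α) : Perm α := swap x y * swap y z

theorem threeCycle_conj (g : Perm α) (x y z : α) :
    g * threeCycle x y z * g⁻¹ = threeCycle (g x) (g y) (g z) := by
  simp only [threeCycle, swap_apply_apply]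
  group

variable {x y z : α}

theorem threeCycle_rotate (hxy : x ≠ y) (hyz : y ≠ z) (hxz : x ≠ z) :
    threeCycle y z x = threeCycle x y z := by
  ext w
  simp only [threeCycle, mul_apply, swap_apply_def]
  grind

theorem threeCycle_inv (hxy : x ≠ y) (hyz : y ≠ z) (hxz : x ≠ z) :
    (threeCycle x y z)⁻¹ = threeCycle x z y := by
  rw [inv_eq_iff_eq_inv]
  ext w
  simp only [threeCycle, mul_inv_rev, swap_inv, mul_apply, swap_apply_def]
  grind

theorem threeCycle_eq_mul {a : α} (hax : a ≠ x) (hay : a ≠ y) (hxy : x ≠ y) :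
    threeCycle x y z = threeCycle a x y * threeCycle a y z := by
  ext w
  simp only [threeCycle, mul_apply, swap_apply_def]
  grind

theorem threeCycle_eq_mul_inv {a : α} (hax : a ≠ x) (hay : a ≠ y) (haz : a ≠ z)
    (hxy : x ≠ y) (hyz : y ≠ z) (hxz : x ≠ z) :
    threeCycle a y z = threeCycle a x z * (threeCycle a x y)⁻¹ := by
  rw [threeCycle_inv hax hxy hay]
  ext w
  simp only [threeCycle, mul_apply, swap_apply_def]
  grind

variable {H : Subgroup (Perm α)} {a b : α}

theorem threeCycle_mem_of_forall_threeCycle_mem (hab : a ≠ b)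
    (hH : ∀ x, x ≠ a → x ≠ b → threeCycle a b x ∈ H)
    (hya : y ≠ a) (hza : z ≠ a) (hyz : y ≠ z) : threeCycle a y z ∈ H := by
  by_cases hyb : y = b
  · subst hyb
    exact hH z hza hyz.symm
  by_cases hzb : z = b
  · subst hzb
    rw [← threeCycle_inv hab (Ne.symm hyb) (Ne.symm hya)]
    exact inv_mem (hH y hya hyb)
  · rw [threeCycle_eq_mul_inv hab (Ne.symm hya) (Ne.symm hza) (Ne.symm hyb) hyz (Ne.symm hzb)]
    exact mul_mem (hH z hza hzb) (inv_mem (hH y hya hyb))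

theorem alternatingGroup_le_of_forall_threeCycle_mem [Fintype α] (hab : a ≠ b)
    (hH : ∀ x, x ≠ a → x ≠ b → threeCycle a b x ∈ H) : alternatingGroup α ≤ H := by
  have hmem {y z : α} := threeCycle_mem_of_forall_threeCycle_mem (y := y) (z := z) hab hH
  have key (x y z : α) (hxy : x ≠ y) (hyz : y ≠ z) (hxz : x ≠ z) : threeCycle x y z ∈ H := by
    by_cases hxa : x = a
    · rw [hxa] at hxy hxz ⊢
      exact hmem (Ne.symm hxy) (Ne.symm hxz) hyz
    by_cases hya : y = a
    · rw [← threeCycle_rotate hxy hyz hxz, hya]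
      exact hmem (fun h => hyz (hya.trans h.symm)) hxa (Ne.symm hxz)
    by_cases hza : z = a
    · rw [threeCycle_rotate hxz.symm hxy hyz.symm, hza]
      exact hmem hxa hya hxy
    · rw [threeCycle_eq_mul (Ne.symm hxa) (Ne.symm hya) hxy]
      exact mul_mem (hmem hxa hya hxy) (hmem hya hza hyz)
  rw [← closure_three_cycles_eq_alternating, Subgroup.closure_le]
  intro σ hσ
  obtain ⟨x, hx⟩ : σ.support.Nonempty := by
    rw [← Finset.card_pos, hσ.card_support]
    norm_num
  have hdistinct := hσ.nodup_iff_mem_support.mpr hx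
  simp only [List.nodup_cons, List.mem_cons, List.not_mem_nil, or_false, not_or] at hdistinct
  rw [SetLike.mem_coe, hσ.eq_swap_mul_swap_iff_mem_support.mpr hx]
  exact key _ _ _ hdistinct.1.1 hdistinct.2.1 hdistinct.1.2

end ThreeCycle

namespace Equiv.Perm

variable {α β : Type*} [DecidableEq α]

theorem prodExtendRight_mul (a : α) (e f : Perm β) :
    prodExtendRight a (e * f) = prodExtendRight a e * prodExtendRight a f := by
  ext ⟨a', b⟩ <;> by_cases h : a' = a <;> simp [h, prodExtendRight_apply_ne]

theorem prodExtendRight_pow (a : α) (e : Perm β) (k : ℕ) :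
    prodExtendRight a e ^ k = prodExtendRight a (e ^ k) := by
  induction k with
  | zero => ext ⟨a', b⟩ <;> by_cases h : a' = a <;> simp [h, prodExtendRight_apply_ne]
  | succ k ih => rw [pow_succ, ih, pow_succ, prodExtendRight_mul]

end Equiv.Perm

theorem exists_finRotate_pow_apply_eq {n : ℕ} (x y : Fin (n + 2)) :
    ∃ k : ℕ, (finRotate (n + 2) ^ k) x = y :=
  isCycle_finRotate.exists_pow_eq (by simp) (by simp)

section Torus

variable {m n : ℕ}

theorem rowRot_apply (i : Fin m) (p : Fin m × Fin n) :
    rowRot m n i p = if p.1 = i then (i, finRotate n p.2) else p := rfl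

theorem colRot_apply (j : Fin n) (p : Fin m × Fin n) :
    colRot m n j p = if p.2 = j then (finRotate m p.1, j) else p := rfl

theorem rowRot_eq_prodExtendRight (i : Fin m) :
    rowRot m n i = prodExtendRight i (finRotate n) := rfl

theorem colRot_eq_permCongr (j : Fin n) :
    colRot m n j = (prodComm (Fin n) (Fin m)).permCongr (rowRot n m j) := by
  ext ⟨a, b⟩ <;> by_cases h : b = j <;> simp [colRot, rowRot, h]

theorem rowRot_pow_apply (i : Fin m) (k : ℕ) (p : Fin m × Fin n) :
    (rowRot m n i ^ k) p = if p.1 = i then (i, (finRotate n ^ k) p.2) else p := by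
  rw [rowRot_eq_prodExtendRight, prodExtendRight_pow]
  rfl

theorem colRot_pow_apply (j : Fin n) (k : ℕ) (p : Fin m × Fin n) :
    (colRot m n j ^ k) p = if p.2 = j then ((finRotate m ^ k) p.1, j) else p := by
  rw [colRot_eq_permCongr]
  change ((prodComm (Fin n) (Fin m)).permCongrHom (rowRot n m j) ^ k) p = _
  rw [← map_pow]
  change prodComm _ _ ((rowRot n m j ^ k) p.swap) = _
  rw [rowRot_pow_apply, Prod.fst_swap]
  split_ifs <;> rfl

theorem sign_rowRot (i : Fin m) : sign (rowRot m n i) = sign (finRotate n) :=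
  sign_prodExtendRight i _

theorem sign_colRot (j : Fin n) : sign (colRot m n j) = sign (finRotate m) := by
  rw [colRot_eq_permCongr, sign_permCongr, sign_rowRot]

theorem rowRot_mem_torusGroup (i : Fin m) : rowRot m n i ∈ torusGroup m n :=
  Subgroup.subset_closure (Or.inl ⟨i, rfl⟩)

theorem colRot_mem_torusGroup (j : Fin n) : colRot m n j ∈ torusGroup m n :=
  Subgroup.subset_closure (Or.inr ⟨j, rfl⟩)

theorem torusGroup_le_alternatingGroup (hm : Odd m) (hn : Odd n) :
    torusGroup m n ≤ alternatingGroup (Fin m × Fin n) := by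
  obtain ⟨k, rfl⟩ := hm
  obtain ⟨l, rfl⟩ := hn
  rw [torusGroup, Subgroup.closure_le]
  rintro _ (⟨i, rfl⟩ | ⟨j, rfl⟩) <;> rw [SetLike.mem_coe, mem_alternatingGroup]
  · rw [sign_rowRot]
    exact finRotate_bit1_mem_alternatingGroup
  · rw [sign_colRot]
    exact finRotate_bit1_mem_alternatingGroup

theorem commutator_rowRot_colRot :
    ⁅rowRot (m + 2) (n + 2) 0, colRot (m + 2) (n + 2) 0⁆ = threeCycle (0, 0) (0, 1) (1, 0) := by
  rw [commutatorElement_def, mul_inv_eq_iff_eq_mul, mul_inv_eq_iff_eq_mul]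
  refine Equiv.ext fun ⟨a, b⟩ => ?_
  by_cases ha : a = 0 <;> by_cases hb : b = 0 <;>
    simp [ha, hb, mul_apply, rowRot_apply, colRot_apply, threeCycle, swap_apply_def]
  split_ifs <;> simp_all [Prod.ext_iff]

theorem exists_mem_torusGroup_fixing_apply_eq {x : Fin (m + 2) × Fin (n + 3)}
    (hx₀ : x ≠ (0, 0)) (hx₁ : x ≠ (0, 1)) :
    ∃ g ∈ torusGroup (m + 2) (n + 3), g (0, 0) = (0, 0) ∧ g (0, 1) = (0, 1) ∧ g (1, 0) = x := by
  obtain ⟨u, v⟩ := x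
  by_cases hu : u = 0
  · subst hu
    have hv₀ : 0 ≠ v := by rintro rfl; exact hx₀ rfl
    have hv₁ : 1 ≠ v := by rintro rfl; exact hx₁ rfl
    obtain ⟨k, hk⟩ := exists_finRotate_pow_apply_eq 0 v
    obtain ⟨l, hl⟩ := exists_finRotate_pow_apply_eq 1 (0 : Fin (m + 2))
    refine ⟨colRot _ _ v ^ l * rowRot _ _ 1 ^ k,
      mul_mem (pow_mem (colRot_mem_torusGroup v) l) (pow_mem (rowRot_mem_torusGroup 1) k), ?_⟩
    simp [rowRot_pow_apply, colRot_pow_apply, hk, hl, hv₀, hv₁]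
  · have h₀₂ : (0 : Fin (n + 3)) ≠ 2 := by simp [Fin.ext_iff, Nat.mod_eq_of_lt]
    have h₁₂ : (1 : Fin (n + 3)) ≠ 2 := by simp [Fin.ext_iff, Nat.mod_eq_of_lt]
    obtain ⟨k, hk⟩ := exists_finRotate_pow_apply_eq 0 (2 : Fin (n + 3))
    obtain ⟨l, hl⟩ := exists_finRotate_pow_apply_eq 1 u
    obtain ⟨r, hr⟩ := exists_finRotate_pow_apply_eq 2 v
    refine ⟨rowRot _ _ u ^ r * colRot _ _ 2 ^ l * rowRot _ _ 1 ^ k,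
      mul_mem (mul_mem (pow_mem (rowRot_mem_torusGroup u) r)
        (pow_mem (colRot_mem_torusGroup 2) l)) (pow_mem (rowRot_mem_torusGroup 1) k), ?_⟩
    simp [rowRot_pow_apply, colRot_pow_apply, hk, hl, hr, h₀₂, h₁₂, Ne.symm hu]

theorem threeCycle_mem_torusGroup {x : Fin (m + 2) × Fin (n + 3)}
    (hx₀ : x ≠ (0, 0)) (hx₁ : x ≠ (0, 1)) :
    threeCycle (0, 0) (0, 1) x ∈ torusGroup (m + 2) (n + 3) := by
  have hc : threeCycle (0, 0) (0, 1) (1, 0) ∈ torusGroup (m + 2) (n + 3) := by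
    rw [← commutator_rowRot_colRot, commutatorElement_def]
    exact mul_mem (mul_mem (mul_mem (rowRot_mem_torusGroup 0) (colRot_mem_torusGroup 0))
      (inv_mem (rowRot_mem_torusGroup 0))) (inv_mem (colRot_mem_torusGroup 0))
  obtain ⟨g, hg, h₀, h₁, h₂⟩ := exists_mem_torusGroup_fixing_apply_eq hx₀ hx₁
  have hconj := mul_mem (mul_mem hg hc) (inv_mem hg)
  rwa [threeCycle_conj, h₀, h₁, h₂] at hconj

end Torus

/-- When both  and  are odd, `G(m,n)` is the alternating group. -/
theorem torusGroup_eq_alternatingGroup_of_odd_odd (m n : ℕ)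
    (hm : 3 ≤ m) (hn : 3 ≤ n) (hmo : Odd m) (hno : Odd n) :
    torusGroup m n = alternatingGroup (Fin m × Fin n) := by
  obtain ⟨m, rfl⟩ : ∃ k, m = k + 2 := ⟨m - 2, by omega⟩
  obtain ⟨n, rfl⟩ : ∃ k, n = k + 3 := ⟨n - 3, by omega⟩
  refine le_antisymm (torusGroup_le_alternatingGroup hmo hno) ?_
  exact alternatingGroup_le_of_forall_threeCycle_mem (by simp) fun _ => threeCycle_mem_torusGroup
end

section
/- There exists a constant C > 0 such that for all integers m, n with 2 ≤ m ≤ n and every configuration A of the m × n Torus Puzzle, there is a finite sequence of at most C · m · n · ⌈log₂ n⌉ unit rotations whose application to A produces a configuration in which every column is near-full. -/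
/- Applying a unit rotation g to a configuration A yields A ∘ g⁻¹. -/
def applyRot {m n : ℕ} (A : (Fin m × Fin n) ≃ Fin (m * n))
    (g : Equiv.Perm (Fin m × Fin n)) : (Fin m × Fin n) ≃ Fin (m * n) :=
  g.symm.trans A

/- Applying a finite sequence of rotations, one after another (left to right). -/
def applySeq {m n : ℕ} (A : (Fin m × Fin n) ≃ Fin (m * n))
    (L : List (Equiv.Perm (Fin m × Fin n))) : (Fin m × Fin n) ≃ Fin (m * n) :=
  L.foldl applyRot A

/- Column j is near-full: every element in the body of column j has target column j. -/
def NearFull {m n : ℕ} (A : (Fin m × Fin n) ≃ Fin (m * n)) (j : Fin n) : Prop :=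
  ∀ i : Fin m, 1 ≤ (i : ℕ) → (A (i, j) : ℕ) % n = (j : ℕ)

/- The body of column j contains exactly the elements with target column j and target row ≥ 1. -/
def BodyOfColumnIsFull {m n : ℕ} (A : (Fin m × Fin n) ≃ Fin (m * n)) (j : Fin n) : Prop :=
  ∀ v : Fin (m * n),
    (∃ i : Fin m, 1 ≤ (i : ℕ) ∧ A (i, j) = v) ↔ ((v : ℕ) % n = (j : ℕ) ∧ 1 ≤ (v : ℕ) / n)

/- Column j is body-sorted: every element of the body of column j is in its target position. -/
def BodySorted {m n : ℕ} (A : (Fin m × Fin n) ≃ Fin (m * n)) (j : Fin n) : Prop :=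
  ∀ i : Fin m, 1 ≤ (i : ℕ) → (A (i, j) : ℕ) = (i : ℕ) * n + (j : ℕ)

/-!
Rotate row 0 one step at a time; after each rotation, rotate down every column `j` that is not
yet near-full and whose top cell holds an element with target column `j` (an insertion). Let
`p_j` be the length of the run of rows `1, 2, …` of column `j` holding elements of target
column `j`. An insertion moves the top element to row 1 and shifts that run down, so it lengthens
it, and the deficit `D = ∑ j, (m - 1 - p_j)` pays for every insertion.

In a sweep of `n` row rotations, an element that starts in row 0 and is never inserted passes
its target column, which must then be near-full. Afterwards each top cell therefore holds an
element brought up from the body by one of the `D - D'` insertions, or an element whose target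
column is near-full; a near-full column leaves room for only one element of its target column
outside its body. So at most `D - D'` columns are not near-full, `D' ≤ (m - 1) (D - D')`, and a
sweep multiplies `D` by at most `(m - 1) / m`. As `((m - 1) / m) ^ m ≤ 1 / 2`, after
`m (2 ⌈log₂ n⌉ + 1)` sweeps the deficit, initially `≤ n (m - 1) < n²`, is zero: all columns are
near-full, after `O(m n log n)` moves.
-/

namespace TorusPuzzle

open Finset Function Relation Fin.NatCast

lemma pow_mul_iterate_le {α : Type*} {f : α → α} {D : α → ℕ} {a b : ℕ}
    (h : ∀ x, a * D (f x) ≤ b * D x) (k : ℕ) (x : α) :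
    a ^ k * D (f^[k] x) ≤ b ^ k * D x := by
  induction k generalizing x with
  | zero => simp
  | succ k ih =>
    rw [iterate_succ_apply]
    calc a ^ (k + 1) * D (f^[k] (f x)) = a * (a ^ k * D (f^[k] (f x))) := by ring
      _ ≤ a * (b ^ k * D (f x)) := Nat.mul_le_mul_left _ (ih _)
      _ = b ^ k * (a * D (f x)) := by ring
      _ ≤ b ^ k * (b * D x) := Nat.mul_le_mul_left _ (h x)
      _ = b ^ (k + 1) * D x := by ring

lemma two_mul_pow_le_succ_pow (k : ℕ) : 2 * k ^ (k + 1) ≤ (k + 1) ^ (k + 1) := by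
  have hbern := pow_add_mul_le_add_pow (a := k) (b := 1) (Nat.zero_le _) (Nat.zero_le _) (k + 1)
  have hk : k ^ (k + 1) ≤ (k + 1) * k ^ k := by
    rw [pow_succ']
    exact Nat.mul_le_mul_right _ (Nat.le_succ k)
  simp only [Nat.cast_id, Nat.add_sub_cancel, mul_one] at hbern
  omega

abbrev Config (m n : ℕ) := (Fin m × Fin n) ≃ Fin (m * n)

section Basics

variable {m n : ℕ}

def ReachableIn (A B : Config m n) (k : ℕ) : Prop :=
  ∃ L : List (Equiv.Perm (Fin m × Fin n)),
    (∀ g ∈ L, g ∈ unitRotations m n) ∧ L.length ≤ k ∧ applySeq A L = B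

lemma ReachableIn.refl (A : Config m n) : ReachableIn A A 0 :=
  ⟨[], by simp, le_rfl, rfl⟩

lemma ReachableIn.trans {A B C : Config m n} {k l : ℕ} (hAB : ReachableIn A B k)
    (hBC : ReachableIn B C l) : ReachableIn A C (k + l) := by
  obtain ⟨L, hL, hlen, rfl⟩ := hAB
  obtain ⟨L', hL', hlen', rfl⟩ := hBC
  refine ⟨L ++ L', fun g hg => ?_, by rw [List.length_append]; omega, List.foldl_append ..⟩
  rcases List.mem_append.1 hg with hg | hg
  exacts [hL g hg, hL' g hg]

lemma reachableIn_applyRot (A : Config m n) {g : Equiv.Perm (Fin m × Fin n)}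
    (hg : g ∈ unitRotations m n) : ReachableIn A (applyRot A g) 1 :=
  ⟨[g], by simpa using hg, le_rfl, rfl⟩

lemma applyRot_apply_apply (A : Config m n) (g : Equiv.Perm (Fin m × Fin n)) (p : Fin m × Fin n) :
    applyRot A g (g p) = A p := by
  simp [applyRot]

lemma applyRot_apply_of_apply_eq (A : Config m n) {g : Equiv.Perm (Fin m × Fin n)}
    {p : Fin m × Fin n} (h : g p = p) : applyRot A g p = A p := by
  conv_lhs => rw [← h]
  exact applyRot_apply_apply A g p

lemma applyRot_symm_apply (A : Config m n) (g : Equiv.Perm (Fin m × Fin n)) (v : Fin (m * n)) :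
    (applyRot A g).symm v = g (A.symm v) := by
  simp [applyRot]

lemma rowRot_apply_self (i : Fin m) (c : Fin n) : rowRot m n i (i, c) = (i, finRotate n c) := by
  simp [rowRot, -finRotate_apply]

lemma rowRot_apply_of_ne {i : Fin m} {p : Fin m × Fin n} (h : p.1 ≠ i) : rowRot m n i p = p := by
  simp [rowRot, h]

lemma colRot_apply_self (i : Fin m) (j : Fin n) : colRot m n j (i, j) = (finRotate m i, j) := by
  simp [colRot, -finRotate_apply]

lemma colRot_apply_of_ne {j : Fin n} {p : Fin m × Fin n} (h : p.2 ≠ j) : colRot m n j p = p := by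
  simp [colRot, h]

def rotateCol (A : Config m n) (j : Fin n) : Config m n := applyRot A (colRot m n j)

lemma rotateCol_symm_apply (A : Config m n) (j : Fin n) (v : Fin (m * n)) :
    (rotateCol A j).symm v = colRot m n j (A.symm v) :=
  applyRot_symm_apply A _ v

lemma rotateCol_apply_finRotate (A : Config m n) (i : Fin m) (j : Fin n) :
    rotateCol A j (finRotate m i, j) = A (i, j) := by
  rw [rotateCol, ← colRot_apply_self, applyRot_apply_apply]

lemma rotateCol_apply_of_ne (A : Config m n) {j j' : Fin n} (i : Fin m) (h : j' ≠ j) :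
    rotateCol A j (i, j') = A (i, j') :=
  applyRot_apply_of_apply_eq A (colRot_apply_of_ne h)

def Good (A : Config m n) (i : Fin m) (j : Fin n) : Prop := (A (i, j)).modNat = j

instance (A : Config m n) (i : Fin m) (j : Fin n) : Decidable (Good A i j) :=
  inferInstanceAs (Decidable (_ = _))

lemma nearFull_iff_forall_good (A : Config m n) (j : Fin n) :
    NearFull A j ↔ ∀ i : Fin m, 1 ≤ (i : ℕ) → Good A i j := by
  simp [NearFull, Good, Fin.ext_iff]

instance (A : Config m n) : DecidablePred (NearFull A) := fun j =>
  decidable_of_iff' _ (nearFull_iff_forall_good A j)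

def GoodUpTo (A : Config m n) (j : Fin n) (k : ℕ) : Prop :=
  ∀ i : Fin m, 1 ≤ (i : ℕ) → (i : ℕ) ≤ k → Good A i j

instance (A : Config m n) (j : Fin n) : DecidablePred (GoodUpTo A j) := fun _ =>
  inferInstanceAs (Decidable (∀ _, _))

def goodPrefix (A : Config m n) (j : Fin n) : ℕ := Nat.findGreatest (GoodUpTo A j) (m - 1)

lemma goodPrefix_le (A : Config m n) (j : Fin n) : goodPrefix A j ≤ m - 1 :=
  Nat.findGreatest_le _

lemma goodUpTo_goodPrefix (A : Config m n) (j : Fin n) : GoodUpTo A j (goodPrefix A j) :=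
  Nat.findGreatest_spec (P := GoodUpTo A j) (Nat.zero_le _) fun _ h h0 => by omega

lemma le_goodPrefix {A : Config m n} {j : Fin n} {k : ℕ} (hk : k ≤ m - 1) (h : GoodUpTo A j k) :
    k ≤ goodPrefix A j :=
  Nat.le_findGreatest hk h

lemma goodPrefix_congr {A B : Config m n} {j : Fin n}
    (h : ∀ i : Fin m, 1 ≤ (i : ℕ) → A (i, j) = B (i, j)) :
    goodPrefix A j = goodPrefix B j := by
  have : GoodUpTo A j = GoodUpTo B j := by
    ext k
    exact forall_congr' fun i => imp_congr_right fun hi => by rw [Good, Good, h i hi]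
  unfold goodPrefix
  congr 1

lemma nearFull_iff_goodPrefix_eq (A : Config m n) (j : Fin n) :
    NearFull A j ↔ goodPrefix A j = m - 1 := by
  rw [nearFull_iff_forall_good]
  refine ⟨fun h => (goodPrefix_le A j).antisymm (le_goodPrefix le_rfl fun i hi _ => h i hi),
    fun h i hi => goodUpTo_goodPrefix A j i hi (h ▸ by omega)⟩

lemma goodPrefix_lt {A : Config m n} {j : Fin n} (h : ¬ NearFull A j) : goodPrefix A j < m - 1 :=
  (goodPrefix_le A j).lt_of_ne (mt (nearFull_iff_goodPrefix_eq A j).2 h)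

lemma goodPrefix_rotateCol_of_ne (A : Config m n) {j j' : Fin n} (h : j' ≠ j) :
    goodPrefix (rotateCol A j) j' = goodPrefix A j' :=
  goodPrefix_congr fun i _ => rotateCol_apply_of_ne A i h

def deficit (A : Config m n) : ℕ := ∑ j, (m - 1 - goodPrefix A j)

lemma deficit_le (A : Config m n) : deficit A ≤ n * (m - 1) := by
  simpa [deficit] using sum_le_card_nsmul univ (fun j => m - 1 - goodPrefix A j) (m - 1) (by simp)

lemma deficit_le_mul_card_not_nearFull (A : Config m n) :
    deficit A ≤ (m - 1) * #{j | ¬ NearFull A j} := by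
  rw [deficit, ← sum_filter_of_ne fun j _ hj => mt (nearFull_iff_goodPrefix_eq A j).1 (by omega)]
  rw [mul_comm, ← smul_eq_mul]
  exact sum_le_card_nsmul _ _ _ fun j _ => Nat.sub_le _ _

lemma nearFull_of_deficit_eq_zero {A : Config m n} (h : deficit A = 0) (j : Fin n) :
    NearFull A j := by
  have := sum_eq_zero_iff.1 h j (mem_univ j)
  exact (nearFull_iff_goodPrefix_eq A j).2 ((goodPrefix_le A j).antisymm (by omega))

end Basics

section Moves

variable {m n : ℕ} [NeZero m]

def rotateTopRow (A : Config m n) : Config m n := applyRot A (rowRot m n 0)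

lemma rotateTopRow_symm_apply (A : Config m n) (v : Fin (m * n)) :
    (rotateTopRow A).symm v = rowRot m n 0 (A.symm v) :=
  applyRot_symm_apply A _ v

lemma rotateTopRow_apply_finRotate (A : Config m n) (c : Fin n) :
    rotateTopRow A (0, finRotate n c) = A (0, c) := by
  rw [rotateTopRow, ← rowRot_apply_self, applyRot_apply_apply]

lemma rotateTopRow_apply_of_ne_zero (A : Config m n) {i : Fin m} (j : Fin n) (hi : i ≠ 0) :
    rotateTopRow A (i, j) = A (i, j) :=
  applyRot_apply_of_apply_eq A (rowRot_apply_of_ne hi)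

lemma goodPrefix_rotateTopRow (A : Config m n) (j : Fin n) :
    goodPrefix (rotateTopRow A) j = goodPrefix A j :=
  goodPrefix_congr fun _ hi => rotateTopRow_apply_of_ne_zero A j (Fin.pos_iff_ne_zero.1 hi)

lemma deficit_rotateTopRow (A : Config m n) : deficit (rotateTopRow A) = deficit A := by
  simp only [deficit, goodPrefix_rotateTopRow]

def Insertable (A : Config m n) (j : Fin n) : Prop := Good A 0 j ∧ ¬ NearFull A j

lemma Insertable.goodPrefix_lt_rotateCol {A : Config m n} {j : Fin n} (h : Insertable A j) :
    goodPrefix A j < goodPrefix (rotateCol A j) j := by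
  have hlt := goodPrefix_lt h.2
  refine Nat.lt_of_succ_le (le_goodPrefix (by omega) fun i hi hik => ?_)
  obtain ⟨i, rfl⟩ := (finRotate m).surjective i
  have hval : (i : ℕ) = (finRotate m i : ℕ) - 1 := by
    rw [← coe_finRotate_symm_of_ne_zero (Fin.pos_iff_ne_zero.1 hi), Equiv.symm_apply_apply]
  rw [Good, rotateCol_apply_finRotate]
  rcases eq_or_ne i 0 with rfl | hi0
  · exact h.1
  · exact goodUpTo_goodPrefix A j i (Fin.pos_iff_ne_zero.2 hi0) (by omega)

lemma Insertable.deficit_rotateCol_lt {A : Config m n} {j : Fin n} (h : Insertable A j) :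
    deficit (rotateCol A j) < deficit A := by
  have hlt := goodPrefix_lt h.2
  have hj := h.goodPrefix_lt_rotateCol
  refine sum_lt_sum (fun j' _ => ?_) ⟨j, mem_univ j, by omega⟩
  rcases eq_or_ne j' j with rfl | hj'
  · omega
  · rw [goodPrefix_rotateCol_of_ne A hj']

lemma NearFull.rotateTopRow {A : Config m n} {j : Fin n} (h : NearFull A j) :
    NearFull (rotateTopRow A) j := by
  rwa [nearFull_iff_goodPrefix_eq, goodPrefix_rotateTopRow, ← nearFull_iff_goodPrefix_eq]

lemma NearFull.rotateCol {A : Config m n} {j j' : Fin n} (hj : Insertable A j)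
    (h : NearFull A j') : NearFull (rotateCol A j) j' := by
  have hne : j' ≠ j := by rintro rfl; exact hj.2 h
  rwa [nearFull_iff_goodPrefix_eq, goodPrefix_rotateCol_of_ne A hne,
    ← nearFull_iff_goodPrefix_eq]

def Placed (A : Config m n) (v : Fin (m * n)) : Prop :=
  1 ≤ ((A.symm v).1 : ℕ) ∧ ((A.symm v).1 : ℕ) ≤ goodPrefix A (A.symm v).2

lemma Placed.rotateTopRow {A : Config m n} {v : Fin (m * n)} (h : Placed A v) :
    Placed (rotateTopRow A) v := by
  have hfix : rowRot m n 0 (A.symm v) = A.symm v :=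
    rowRot_apply_of_ne (Fin.pos_iff_ne_zero.1 h.1)
  rw [Placed, rotateTopRow_symm_apply, hfix, goodPrefix_rotateTopRow]
  exact h

lemma Placed.rotateCol {A : Config m n} {j : Fin n} (hj : Insertable A j) {v : Fin (m * n)}
    (h : Placed A v) : Placed (rotateCol A j) v := by
  obtain ⟨⟨i, j'⟩, hv⟩ : ∃ p, A.symm v = p := ⟨_, rfl⟩
  rw [Placed, hv] at h
  dsimp only at h
  rw [Placed, rotateCol_symm_apply, hv]
  rcases eq_or_ne j' j with rfl | hj'
  · have hlt := goodPrefix_lt hj.2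
    have hgt := hj.goodPrefix_lt_rotateCol
    have hval : (finRotate m i : ℕ) = i + 1 := by
      rw [finRotate_apply, Fin.val_add_one_of_lt' (by omega)]
    rw [colRot_apply_self]
    dsimp only
    omega
  · rwa [colRot_apply_of_ne hj', goodPrefix_rotateCol_of_ne A hj']

lemma Insertable.placed_rotateCol {A : Config m n} {j : Fin n} (hj : Insertable A j)
    {v : Fin (m * n)} (hv : A.symm v = (0, j)) : Placed (rotateCol A j) v := by
  have hlt := goodPrefix_lt hj.2
  have hgt := hj.goodPrefix_lt_rotateCol
  have hval : (finRotate m 0 : ℕ) = 1 := by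
    rw [finRotate_apply, zero_add, Fin.val_one']
    exact Nat.mod_eq_of_lt (by omega)
  rw [Placed, rotateCol_symm_apply, hv, colRot_apply_self, hval]
  dsimp only
  omega

def topCount (A : Config m n) (S : Finset (Fin (m * n))) : ℕ := #{c | A (0, c) ∈ S}

lemma topCount_rotateTopRow (A : Config m n) (S : Finset (Fin (m * n))) :
    topCount (rotateTopRow A) S = topCount A S := by
  refine card_equiv (finRotate n).symm fun c => ?_
  simp only [mem_filter, mem_univ, true_and]
  rw [← rotateTopRow_apply_finRotate A ((finRotate n).symm c), Equiv.apply_symm_apply]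

lemma topCount_rotateCol_le (A : Config m n) (j : Fin n) (S : Finset (Fin (m * n))) :
    topCount (rotateCol A j) S ≤ topCount A S + 1 := by
  refine (card_le_card fun c hc => ?_).trans (card_insert_le j _)
  rcases eq_or_ne c j with rfl | hc'
  · exact mem_insert_self _ _
  · simp_all [rotateCol_apply_of_ne A 0 hc']

end Moves

section Counting

variable {m n : ℕ}

lemma card_modNat_apply_eq (A : Config m n) (r : Fin n) : #{p | (A p).modNat = r} = m :=
  calc #{p | (A p).modNat = r}
      _ = #{x : Fin m × Fin n | x.2 = r} :=
        card_equiv (A.trans finProdFinEquiv.symm) fun p => by simp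
      _ = #((univ : Finset (Fin m)) ×ˢ {r}) := by congr 1; ext ⟨a, b⟩; simp [eq_comm]
      _ = m := by simp

variable [NeZero m]

lemma card_top_modNat_eq_le_one {A : Config m n} {r : Fin n} (h : NearFull A r) :
    #{c | (A (0, c)).modNat = r} ≤ 1 := by
  set body := (univ.erase (0 : Fin m)).map (Embedding.sectL (Fin m) r)
  set top := ({c | (A (0, c)).modNat = r} : Finset (Fin n)).map
    (Embedding.sectR (0 : Fin m) (Fin n))
  have hbody : #body = m - 1 := by simp [body]
  have hdisj : Disjoint body top := by
    simp only [body, top, disjoint_left, mem_map, mem_erase, Embedding.sectL_apply,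
      Embedding.sectR_apply]
    rintro _ ⟨i, ⟨hi, -⟩, rfl⟩ ⟨c, -, h0⟩
    exact hi (congrArg Prod.fst h0).symm
  have hsub : body ∪ top ⊆ ({p | (A p).modNat = r} : Finset _) := by
    intro p hp
    simp only [body, top, mem_union, mem_map, mem_erase, mem_filter, mem_univ, true_and,
      Embedding.sectL_apply, Embedding.sectR_apply] at hp ⊢
    rcases hp with ⟨i, ⟨hi, -⟩, rfl⟩ | ⟨c, hc, rfl⟩
    · exact (nearFull_iff_forall_good A r).1 h i (Fin.pos_iff_ne_zero.2 hi)
    · exact hc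
  have := card_le_card hsub
  rw [card_union_of_disjoint hdisj, card_modNat_apply_eq, hbody, card_map] at this
  omega

lemma card_top_nearFull_le (A : Config m n) :
    #{c | NearFull A (A (0, c)).modNat} ≤ #{j | NearFull A j} := by
  rw [card_eq_sum_card_fiberwise (f := fun c => (A (0, c)).modNat) (t := {j | NearFull A j})
    fun c hc => by simpa using hc]
  refine (sum_le_sum fun j hj => ?_).trans_eq (card_eq_sum_ones _).symm
  exact (card_le_card (filter_subset_filter _ (filter_subset _ _))).trans
    (card_top_modNat_eq_le_one (mem_filter.1 hj).2)

lemma deficit_le_mul_topCount (A : Config m n) (S : Finset (Fin (m * n)))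
    (hS : ∀ c, A (0, c) ∈ S ∨ NearFull A (A (0, c)).modNat) :
    deficit A ≤ (m - 1) * topCount A S := by
  have houtside : #{c | A (0, c) ∉ S} ≤ #{c | NearFull A (A (0, c)).modNat} :=
    card_le_card fun c => by simpa using (hS c).resolve_left
  have hsplit : #{c | A (0, c) ∈ S} + #{c | A (0, c) ∉ S} = n := by
    simpa using card_filter_add_card_filter_not (s := univ) fun c : Fin n => A (0, c) ∈ S
  have hfull : #{j | NearFull A j} + #{j | ¬ NearFull A j} = n := by
    simpa using card_filter_add_card_filter_not (s := univ) fun j : Fin n => NearFull A j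
  have := card_top_nearFull_le A
  refine (deficit_le_mul_card_not_nearFull A).trans (Nat.mul_le_mul_left _ ?_)
  rw [topCount]
  omega

end Counting

section Scan

variable {m n : ℕ} [NeZero m]

def Inserts (A B : Config m n) : Prop := ∃ j, Insertable A j ∧ B = rotateCol A j

lemma exists_reflTransGen_inserts_not_insertable (A : Config m n) :
    ∃ B, ReflTransGen Inserts A B ∧ ∀ j, ¬ Insertable B j := by
  induction hd : deficit A using Nat.strong_induction_on generalizing A with
  | _ d ih =>
    by_cases hA : ∃ j, Insertable A j
    · obtain ⟨j, hj⟩ := hA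
      obtain ⟨B, hB, hterm⟩ := ih _ (hd ▸ hj.deficit_rotateCol_lt) (rotateCol A j) rfl
      exact ⟨B, .head ⟨j, hj, rfl⟩ hB, hterm⟩
    · exact ⟨A, .refl, not_exists.1 hA⟩

variable {A B : Config m n}

lemma exists_reachableIn_of_inserts (h : ReflTransGen Inserts A B) :
    ∃ k, ReachableIn A B k ∧ deficit B + k ≤ deficit A := by
  induction h with
  | refl => exact ⟨0, .refl A, le_rfl⟩
  | tail _ hstep ih =>
    obtain ⟨j, hj, rfl⟩ := hstep
    obtain ⟨k, hk, hdk⟩ := ih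
    have := hj.deficit_rotateCol_lt
    exact ⟨k + 1, hk.trans (reachableIn_applyRot _ (Or.inr ⟨j, rfl⟩)), by omega⟩

lemma nearFull_of_inserts (h : ReflTransGen Inserts A B) {j : Fin n} (hA : NearFull A j) :
    NearFull B j := by
  induction h with
  | refl => exact hA
  | tail _ hstep ih => obtain ⟨k, hk, rfl⟩ := hstep; exact NearFull.rotateCol hk ih

lemma placed_of_inserts (h : ReflTransGen Inserts A B) {v : Fin (m * n)} (hA : Placed A v) :
    Placed B v := by
  induction h with
  | refl => exact hA
  | tail _ hstep ih => obtain ⟨k, hk, rfl⟩ := hstep; exact ih.rotateCol hk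

lemma top_or_placed_of_inserts (h : ReflTransGen Inserts A B) {v : Fin (m * n)} {c : Fin n}
    (hv : A.symm v = (0, c)) :
    B.symm v = (0, c) ∨ Placed B v := by
  induction h with
  | refl => exact .inl hv
  | tail _ hstep ih =>
    obtain ⟨k, hk, rfl⟩ := hstep
    rcases ih with hB | hB
    · rcases eq_or_ne c k with rfl | hck
      · exact .inr (hk.placed_rotateCol hB)
      · left
        rw [rotateCol_symm_apply, hB, colRot_apply_of_ne hck]
    · exact .inr (hB.rotateCol hk)

lemma topCount_add_deficit_le_of_inserts (h : ReflTransGen Inserts A B)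
    (S : Finset (Fin (m * n))) :
    topCount B S + deficit B ≤ topCount A S + deficit A := by
  induction h with
  | refl => exact le_rfl
  | @tail C _ _ hstep ih =>
    obtain ⟨k, hk, rfl⟩ := hstep
    have := hk.deficit_rotateCol_lt
    have := topCount_rotateCol_le C k S
    omega

end Scan

section Rounds

variable {m n : ℕ} [NeZero m]

noncomputable def scan (A : Config m n) : Config m n :=
  (exists_reflTransGen_inserts_not_insertable A).choose

lemma reflTransGen_inserts_scan (A : Config m n) : ReflTransGen Inserts A (scan A) :=
  (exists_reflTransGen_inserts_not_insertable A).choose_spec.1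

lemma not_insertable_scan (A : Config m n) (j : Fin n) : ¬ Insertable (scan A) j :=
  (exists_reflTransGen_inserts_not_insertable A).choose_spec.2 j

noncomputable def rotateAndScan (A : Config m n) : Config m n := scan (rotateTopRow A)

lemma exists_reachableIn_rotateAndScan (A : Config m n) :
    ∃ k, ReachableIn A (rotateAndScan A) k ∧
      deficit (rotateAndScan A) + k ≤ deficit A + 1 := by
  obtain ⟨k, hk, hdk⟩ :=
    exists_reachableIn_of_inserts (reflTransGen_inserts_scan (rotateTopRow A))
  rw [deficit_rotateTopRow] at hdk
  exact ⟨1 + k, (reachableIn_applyRot A (Or.inl ⟨0, rfl⟩)).trans hk,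
    by rw [rotateAndScan]; omega⟩

lemma exists_reachableIn_iterate_rotateAndScan (A : Config m n) (s : ℕ) :
    ∃ k, ReachableIn A (rotateAndScan^[s] A) k ∧
      deficit (rotateAndScan^[s] A) + k ≤ deficit A + s := by
  induction s with
  | zero => exact ⟨0, .refl A, le_rfl⟩
  | succ s ih =>
    obtain ⟨k, hk, hdk⟩ := ih
    obtain ⟨l, hl, hdl⟩ := exists_reachableIn_rotateAndScan (rotateAndScan^[s] A)
    rw [iterate_succ_apply']
    exact ⟨k + l, hk.trans hl, by omega⟩

lemma NearFull.rotateAndScan {A : Config m n} {j : Fin n} (h : NearFull A j) :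
    NearFull (rotateAndScan A) j :=
  nearFull_of_inserts (reflTransGen_inserts_scan _) (NearFull.rotateTopRow h)

lemma Placed.rotateAndScan {A : Config m n} {v : Fin (m * n)} (h : Placed A v) :
    Placed (rotateAndScan A) v :=
  placed_of_inserts (reflTransGen_inserts_scan _) h.rotateTopRow

lemma topCount_add_deficit_iterate_rotateAndScan_le (A : Config m n) (S : Finset (Fin (m * n)))
    (s : ℕ) :
    topCount (rotateAndScan^[s] A) S + deficit (rotateAndScan^[s] A) ≤
      topCount A S + deficit A := by
  induction s with
  | zero => exact le_rfl
  | succ s ih =>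
    rw [iterate_succ_apply']
    refine (topCount_add_deficit_le_of_inserts (reflTransGen_inserts_scan _) S).trans ?_
    rwa [topCount_rotateTopRow, deficit_rotateTopRow]

lemma nearFull_rotateAndScan_of_good {A : Config m n} {j : Fin n} (h : Good (rotateAndScan A) 0 j) :
    NearFull (rotateAndScan A) j :=
  not_not.1 fun hj => not_insertable_scan _ j ⟨h, hj⟩

variable [NeZero n]

lemma top_or_placed_rotateAndScan {A : Config m n} {v : Fin (m * n)} {c : Fin n}
    (hv : A.symm v = (0, c)) :
    (rotateAndScan A).symm v = (0, c + 1) ∨ Placed (rotateAndScan A) v := by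
  refine top_or_placed_of_inserts (reflTransGen_inserts_scan _) ?_
  rw [rotateTopRow_symm_apply, hv, rowRot_apply_self, finRotate_apply]

end Rounds

section Sweeps

variable {m n : ℕ} [NeZero m] [NeZero n]

lemma placed_or_top_iterate_rotateAndScan (A : Config m n) {v : Fin (m * n)} {c : Fin n}
    (hv : A.symm v = (0, c)) (s : ℕ) :
    Placed (rotateAndScan^[s] A) v ∨
      ((rotateAndScan^[s] A).symm v = (0, c + (s : Fin n)) ∧
        ∀ t : ℕ, 1 ≤ t → t ≤ s → c + (t : Fin n) = v.modNat →
          NearFull (rotateAndScan^[s] A) v.modNat) := by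
  -- the scan leaves `v` in row 0 over its target column only if that column is near-full
  induction s with
  | zero => exact .inr ⟨by simpa using hv, fun t h1 h2 => by omega⟩
  | succ s ih =>
    rw [iterate_succ_apply']
    set B := rotateAndScan^[s] A
    rcases ih with hB | ⟨hpos, hfull⟩
    · exact .inl (Placed.rotateAndScan hB)
    rcases top_or_placed_rotateAndScan hpos with hpos' | hB
    · have hpos'' : (rotateAndScan B).symm v = (0, c + (s + 1 : ℕ)) := by
        rw [hpos', Nat.cast_succ, add_assoc]
      refine .inr ⟨hpos'', fun t h1 h2 htc => ?_⟩
      rcases Nat.lt_or_ge t (s + 1) with ht | ht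
      · exact NearFull.rotateAndScan (hfull t h1 (by omega) htc)
      · obtain rfl : t = s + 1 := by omega
        apply nearFull_rotateAndScan_of_good
        rw [Good, ← htc, ← hpos'', Equiv.apply_symm_apply, htc]
    · exact .inl hB

lemma body_or_nearFull_top_iterate_rotateAndScan (A : Config m n) (c : Fin n) :
    1 ≤ ((A.symm ((rotateAndScan^[n] A) (0, c))).1 : ℕ) ∨
      NearFull (rotateAndScan^[n] A) ((rotateAndScan^[n] A) (0, c)).modNat := by
  set B := rotateAndScan^[n] A
  set v := B (0, c)
  refine or_iff_not_imp_left.2 fun hrow => ?_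
  have hv : A.symm v = (0, (A.symm v).2) := Prod.ext (Fin.val_eq_zero_iff.1 (by omega)) rfl
  rcases placed_or_top_iterate_rotateAndScan A hv n with hB | ⟨-, hfull⟩
  · have := hB.1
    simp [v, B] at this
  · refine hfull ((v.modNat - (A.symm v).2 - 1 : Fin n) + 1) le_add_self (Fin.is_lt _) ?_
    rw [Nat.cast_succ, Fin.cast_val_eq_self]
    abel

lemma mul_deficit_iterate_rotateAndScan_le (A : Config m n) :
    m * deficit (rotateAndScan^[n] A) ≤ (m - 1) * deficit A := by
  set B := rotateAndScan^[n] A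
  set S : Finset (Fin (m * n)) := {v | 1 ≤ ((A.symm v).1 : ℕ)}
  have hA : topCount A S = 0 := by simp [topCount, S]
  have h1 := topCount_add_deficit_iterate_rotateAndScan_le A S n
  have h2 : deficit B ≤ (m - 1) * topCount B S :=
    deficit_le_mul_topCount B S fun c =>
      (body_or_nearFull_top_iterate_rotateAndScan A c).imp_left fun h => by simpa [S, B] using h
  rw [hA, zero_add] at h1
  have hm : m = (m - 1) + 1 := (Nat.sub_add_cancel NeZero.one_le).symm
  calc m * deficit B = deficit B + (m - 1) * deficit B := by nth_rewrite 1 [hm]; ring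
    _ ≤ (m - 1) * (topCount B S + deficit B) := by rw [mul_add]; omega
    _ ≤ (m - 1) * deficit A := Nat.mul_le_mul_left _ h1

lemma two_mul_deficit_iterate_rotateAndScan_le (hm : 2 ≤ m) (A : Config m n) :
    2 * deficit ((rotateAndScan^[n])^[m] A) ≤ deficit A := by
  have hcontr :=
    pow_mul_iterate_le (f := rotateAndScan^[n]) mul_deficit_iterate_rotateAndScan_le m A
  obtain ⟨k, rfl⟩ : ∃ k, m = k + 1 := ⟨m - 1, by omega⟩
  rw [Nat.add_sub_cancel] at hcontr
  refine Nat.le_of_mul_le_mul_left ?_ (pow_pos (by omega : 0 < k) (k + 1))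
  calc k ^ (k + 1) * (2 * deficit ((rotateAndScan^[n])^[k + 1] A))
      _ = 2 * k ^ (k + 1) * deficit ((rotateAndScan^[n])^[k + 1] A) := by ring
      _ ≤ (k + 1) ^ (k + 1) * deficit ((rotateAndScan^[n])^[k + 1] A) :=
        Nat.mul_le_mul_right _ (two_mul_pow_le_succ_pow k)
      _ ≤ k ^ (k + 1) * deficit A := hcontr

lemma deficit_iterate_rotateAndScan_eq_zero (hm : 2 ≤ m) (A : Config m n) {k : ℕ}
    (hk : deficit A < 2 ^ k) : deficit (((rotateAndScan^[n])^[m])^[k] A) = 0 := by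
  have := pow_mul_iterate_le (f := (rotateAndScan^[n])^[m]) (a := 2) (b := 1)
    (fun x => (two_mul_deficit_iterate_rotateAndScan_le hm x).trans_eq (one_mul _).symm) k A
  rw [one_pow, one_mul] at this
  by_contra h
  have := Nat.le_mul_of_pos_right (2 ^ k) (Nat.pos_of_ne_zero h)
  omega

end Sweeps

end TorusPuzzle

open TorusPuzzle in
theorem fillColumns_bound :
    ∃ C : ℕ, 0 < C ∧ ∀ m n : ℕ, 2 ≤ m → m ≤ n →
      ∀ A : (Fin m × Fin n) ≃ Fin (m * n),
        ∃ L : List (Equiv.Perm (Fin m × Fin n)),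
          (∀ g ∈ L, g ∈ unitRotations m n) ∧
          L.length ≤ C * m * n * Nat.clog 2 n ∧
          ∀ j : Fin n, NearFull (applySeq A L) j := by
  refine ⟨4, by norm_num, fun m n hm hmn A => ?_⟩
  have : NeZero m := ⟨by omega⟩
  have : NeZero n := ⟨by omega⟩
  set c := Nat.clog 2 n
  have hc : 1 ≤ c := Nat.clog_pos one_lt_two (by omega)
  have hn : n ≤ 2 ^ c := Nat.le_pow_clog one_lt_two n
  have hA : deficit A ≤ n * (m - 1) := deficit_le A
  have hsmall : deficit A < 2 ^ (2 * c + 1) :=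
    calc deficit A ≤ n * (m - 1) := hA
      _ < n * n := Nat.mul_lt_mul_of_pos_left (by omega) (by omega)
      _ ≤ 2 ^ c * 2 ^ c := Nat.mul_le_mul hn hn
      _ < 2 ^ (2 * c + 1) := by
        rw [pow_succ, two_mul, pow_add]; exact lt_mul_of_one_lt_right (by positivity) one_lt_two
  obtain ⟨k, ⟨L, hL, hlen, hAL⟩, hk⟩ :=
    exists_reachableIn_iterate_rotateAndScan A (n * m * (2 * c + 1))
  rw [Function.iterate_mul, Function.iterate_mul] at hAL hk
  refine ⟨L, hL, ?_, fun j => hAL ▸ nearFull_of_deficit_eq_zero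
    (deficit_iterate_rotateAndScan_eq_zero hm A hsmall) j⟩
  have : n * (m - 1) ≤ n * m := Nat.mul_le_mul_left _ (Nat.sub_le m 1)
  nlinarith
end

section
/- Let π be a permutation of a finite type that is a single cycle whose support has even cardinality 2k with k ≥ 1. Then there exist involutions σ⁺, υ⁺ and involutions σ⁻, υ⁻ such that π = σ⁺ · υ⁺ with a₂(σ⁺) = a₂(υ⁺) + 1, and π = σ⁻ · υ⁻ with a₂(σ⁻) = a₂(υ⁻) − 1. -/
/- a₂(σ): the number of 2-cycles of an involution σ, i.e. half the cardinality of its support. -/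
def a2 {α : Type*} [Fintype α] [DecidableEq α] (σ : Equiv.Perm α) : ℕ :=
  σ.support.card / 2

section Aux

open Equiv Equiv.Perm Finset

variable {k : ℕ} [NeZero (2 * k)]

private lemma two_k_pos (hk : 1 ≤ k) : 0 < 2 * k := by omega

/-- the model cycle on `ZMod (2*k)` -/
private def modelC (k : ℕ) : Equiv.Perm (ZMod (2 * k)) := Equiv.addLeft 1

private def negP (k : ℕ) : Equiv.Perm (ZMod (2 * k)) :=
  Function.Involutive.toPerm (fun x => -x) (fun x => by ring)

private def onesubP (k : ℕ) : Equiv.Perm (ZMod (2 * k)) :=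
  Function.Involutive.toPerm (fun x => 1 - x) (fun x => by ring)

private def negsubP (k : ℕ) : Equiv.Perm (ZMod (2 * k)) :=
  Function.Involutive.toPerm (fun x => -1 - x) (fun x => by ring)

private lemma negP_sq : negP k * negP k = 1 := by
  ext x; simp [negP, Function.Involutive.toPerm, Equiv.Perm.mul_apply]

private lemma onesubP_sq : onesubP k * onesubP k = 1 := by
  ext x
  simp only [onesubP, Function.Involutive.toPerm, Equiv.coe_fn_mk, Equiv.Perm.mul_apply,
    Equiv.Perm.coe_one, id_eq]
  ring

private lemma negsubP_sq : negsubP k * negsubP k = 1 := by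
  ext x
  simp only [negsubP, Function.Involutive.toPerm, Equiv.coe_fn_mk, Equiv.Perm.mul_apply,
    Equiv.Perm.coe_one, id_eq]
  ring

private lemma modelC_eq_p : modelC k = onesubP k * negP k := by
  ext x
  simp only [modelC, onesubP, negP, Function.Involutive.toPerm, Equiv.coe_fn_mk,
    Equiv.Perm.mul_apply, Equiv.coe_addLeft]
  ring

private lemma modelC_eq_m : modelC k = negP k * negsubP k := by
  ext x
  simp only [modelC, negsubP, negP, Function.Involutive.toPerm, Equiv.coe_fn_mk,
    Equiv.Perm.mul_apply, Equiv.coe_addLeft]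
  ring

private lemma modelC_pow (hk : 1 ≤ k) (m : ℕ) (x : ZMod (2 * k)) :
    ((modelC k) ^ m) x = (m : ZMod (2 * k)) + x := by
  induction m generalizing x with
  | zero => simp
  | succ m ih =>
    rw [pow_succ, Equiv.Perm.mul_apply, ih]
    simp only [modelC, Equiv.coe_addLeft]
    push_cast
    ring

private lemma modelC_isCycle (hk : 1 ≤ k) : (modelC k).IsCycle := by
  haveI : Fact (1 < 2 * k) := ⟨by omega⟩
  refine ⟨0, ?_, fun y hy => ?_⟩
  · simp only [modelC, Equiv.coe_addLeft, add_zero]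
    exact one_ne_zero
  · refine ⟨(y.val : ℤ), ?_⟩
    rw [zpow_natCast, modelC_pow hk]
    simp [ZMod.natCast_val, ZMod.cast_id]

private lemma modelC_support (hk : 1 ≤ k) : (modelC k).support = Finset.univ := by
  haveI : Fact (1 < 2 * k) := ⟨by omega⟩
  ext x
  simp only [Equiv.Perm.mem_support, Finset.mem_univ, iff_true, modelC, Equiv.coe_addLeft]
  intro h
  have : (1 : ZMod (2 * k)) = 0 := by
    have := add_right_cancel (a := (1 : ZMod (2 * k))) (b := x) (c := 0)
    simpa using this (by simpa using h)
  exact one_ne_zero this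

private lemma two_mul_ne_one (hk : 1 ≤ k) (x : ZMod (2 * k)) :
    2 * x ≠ 1 ∧ 2 * x ≠ -1 := by
  have hdvd : (2 : ℕ) ∣ 2 * k := ⟨k, rfl⟩
  let φ : ZMod (2 * k) →+* ZMod 2 := ZMod.castHom hdvd (ZMod 2)
  have h2 : φ (2 * x) = 0 := by
    have h20 : φ 2 = 0 := by
      have h2c : ((2 : ℕ) : ZMod (2 * k)) = (2 : ZMod (2 * k)) := by push_cast; ring
      rw [← h2c, map_natCast]
      decide
    rw [map_mul, h20, zero_mul]
  constructor
  · intro h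
    rw [h, map_one] at h2
    exact one_ne_zero h2
  · intro h
    rw [h] at h2
    simp only [map_neg, map_one] at h2
    have : (-1 : ZMod 2) ≠ 0 := by decide
    exact this h2

private lemma onesubP_support (hk : 1 ≤ k) : (onesubP k).support = Finset.univ := by
  ext x
  simp only [Equiv.Perm.mem_support, Finset.mem_univ, iff_true, onesubP,
    Function.Involutive.toPerm, Equiv.coe_fn_mk]
  intro h
  have : 2 * x = 1 := by linear_combination -h
  exact (two_mul_ne_one hk x).1 this

private lemma negsubP_support (hk : 1 ≤ k) : (negsubP k).support = Finset.univ := by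
  ext x
  simp only [Equiv.Perm.mem_support, Finset.mem_univ, iff_true, negsubP,
    Function.Involutive.toPerm, Equiv.coe_fn_mk]
  intro h
  have : 2 * x = -1 := by linear_combination -h
  exact (two_mul_ne_one hk x).2 this

private lemma negP_support (hk : 1 ≤ k) :
    (negP k).support = Finset.univ \ {0, (k : ZMod (2 * k))} := by
  ext x
  simp only [Equiv.Perm.mem_support, Finset.mem_sdiff, Finset.mem_univ, true_and,
    Finset.mem_insert, Finset.mem_singleton, negP, Function.Involutive.toPerm, Equiv.coe_fn_mk]
  constructor
  · intro h hmem
    apply h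
    rcases hmem with rfl | rfl
    · simp
    · have : (2 : ZMod (2*k)) * (k : ZMod (2*k)) = 0 := by
        have : ((2 * k : ℕ) : ZMod (2 * k)) = 0 := ZMod.natCast_self _
        push_cast at this
        linear_combination this
      linear_combination -this
  · intro h heq
    have h2x : 2 * x = 0 := by linear_combination -heq
    -- 2k ∣ 2 * x.val
    have hx : x = ((x.val : ℕ) : ZMod (2 * k)) := by
      simp [ZMod.natCast_val, ZMod.cast_id]
    have hcast : ((2 * x.val : ℕ) : ZMod (2 * k)) = 0 := by
      push_cast
      rw [← hx]
      exact h2x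
    have hdvd : 2 * k ∣ 2 * x.val := (ZMod.natCast_eq_zero_iff _ _).1 hcast
    have hkdvd : k ∣ x.val := (mul_dvd_mul_iff_left (by norm_num : (2:ℕ) ≠ 0)).1 hdvd
    have hlt : x.val < 2 * k := ZMod.val_lt x
    obtain ⟨t, ht⟩ := hkdvd
    have : t = 0 ∨ t = 1 := by
      rcases Nat.lt_or_ge t 2 with h' | h'
      · omega
      · exfalso; nlinarith
    rcases this with rfl | rfl
    · exact h (Or.inl (by rw [hx]; simp [ht]))
    · exact h (Or.inr (by rw [hx, ht]; simp))
    
private lemma negP_support_card (hk : 1 ≤ k) :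
    (negP k).support.card = 2 * k - 2 := by
  rw [negP_support hk]
  have hne : (0 : ZMod (2 * k)) ≠ (k : ZMod (2 * k)) := by
    intro h
    have : (2 * k : ℕ) ∣ k := (ZMod.natCast_eq_zero_iff _ _).1 h.symm
    have := Nat.le_of_dvd (by omega) this
    omega
  rw [Finset.card_sdiff_of_subset (Finset.subset_univ _), Finset.card_univ, ZMod.card,
    Finset.card_insert_of_notMem (by simpa using hne), Finset.card_singleton]

end Aux

/- An even-length cycle is a product of two involutions in two ways: one where the first
involution has one more transposition than the second, and one where it has one fewer. -/
theorem even_cycle_eq_prod_two_involutions {α : Type*} [Fintype α] [DecidableEq α]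
    (π : Equiv.Perm α) (k : ℕ) (hcyc : π.IsCycle) (hcard : π.support.card = 2 * k)
    (hk : 1 ≤ k) :
    (∃ σp υp : Equiv.Perm α, σp * σp = 1 ∧ υp * υp = 1 ∧ π = σp * υp ∧
      a2 σp = a2 υp + 1) ∧
    (∃ σm υm : Equiv.Perm α, σm * σm = 1 ∧ υm * υm = 1 ∧ π = σm * υm ∧
      a2 σm + 1 = a2 υm) := by
  haveI : NeZero (2 * k) := ⟨by omega⟩
  classical
  -- equiv between ZMod (2*k) and the support of π
  have hcards : Fintype.card (ZMod (2 * k)) = Fintype.card {x // x ∈ π.support} := by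
    rw [ZMod.card, Fintype.card_coe, hcard]
  let f : ZMod (2 * k) ≃ {x // x ∈ π.support} := Fintype.equivOfCardEq hcards
  let E : Equiv.Perm (ZMod (2 * k)) → Equiv.Perm α := fun e => e.extendDomain f
  have hE_mul : ∀ e₁ e₂, E (e₁ * e₂) = E e₁ * E e₂ := fun e₁ e₂ =>
    (Equiv.Perm.extendDomain_mul f e₁ e₂).symm
  have hE_one : E 1 = 1 := Equiv.Perm.extendDomain_one f
  have hE_card : ∀ e, (E e).support.card = e.support.card := fun e =>
    Equiv.Perm.card_support_extend_domain f
  -- the extended model cycle is conjugate to π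
  have hconj : IsConj (E (modelC k)) π := by
    refine Equiv.Perm.IsCycle.isConj ((modelC_isCycle hk).extendDomain f) hcyc ?_
    rw [hE_card, modelC_support hk, Finset.card_univ, ZMod.card, hcard]
  obtain ⟨g, hg⟩ := isConj_iff.1 hconj
  have hsupp_univ : (Finset.univ : Finset (ZMod (2 * k))).card = 2 * k := by
    rw [Finset.card_univ, ZMod.card]
  have hconj_sq : ∀ e : Equiv.Perm (ZMod (2 * k)), e * e = 1 →
      (g * E e * g⁻¹) * (g * E e * g⁻¹) = 1 := by
    intro e he
    have hE : E e * E e = 1 := by rw [← hE_mul, he, hE_one]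
    simp only [mul_assoc, inv_mul_cancel_left]
    rw [← mul_assoc (E e), hE, one_mul, mul_inv_cancel]
  have hconj_prod : ∀ e₁ e₂ : Equiv.Perm (ZMod (2 * k)), modelC k = e₁ * e₂ →
      π = (g * E e₁ * g⁻¹) * (g * E e₂ * g⁻¹) := by
    intro e₁ e₂ he
    rw [← hg]
    simp only [mul_assoc, inv_mul_cancel_left]
    rw [← mul_assoc (E e₁), ← hE_mul, ← he]
  constructor
  · refine ⟨g * E (onesubP k) * g⁻¹, g * E (negP k) * g⁻¹, hconj_sq _ onesubP_sq,
      hconj_sq _ negP_sq, hconj_prod _ _ modelC_eq_p, ?_⟩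
    · unfold a2
      rw [Equiv.Perm.card_support_conj, Equiv.Perm.card_support_conj, hE_card, hE_card,
        onesubP_support hk, negP_support_card hk, hsupp_univ]
      omega
  · refine ⟨g * E (negP k) * g⁻¹, g * E (negsubP k) * g⁻¹, hconj_sq _ negP_sq,
      hconj_sq _ negsubP_sq, hconj_prod _ _ modelC_eq_m, ?_⟩
    · unfold a2
      rw [Equiv.Perm.card_support_conj, Equiv.Perm.card_support_conj, hE_card, hE_card,
        negsubP_support hk, negP_support_card hk, hsupp_univ]
      omega
end

section
/- Let π be an even permutation of a finite type (i.e., its sign is 1). Then there exist involutions σ and υ such that π = σ · υ and a₂(σ) = a₂(υ). -/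
/-!
An `n`-cycle is conjugate to the translation `x ↦ x + 1` of `ZMod n`, which is the product of
the reflections `x ↦ 1 - x` and `x ↦ -x`. A reflection of a finite cyclic group fixes at most two
points, so the two factors have numbers of 2-cycles differing by at most one. Factorizations of
disjoint permutations multiply, and since `σ * υ = (σ * υ * σ⁻¹) * σ` the two factors may be
exchanged, so the imbalances of the cycles of `π` can be made to cancel up to one. Finally
`sign π = (-1) ^ (a₂ σ + a₂ υ)`, so for even `π` the remaining imbalance is zero.
-/

open Equiv Equiv.Perm Finset

section AddCommGroup

variable {G : Type*} [AddCommGroup G] [Fintype G] [DecidableEq G]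

theorem support_addLeft {a : G} (ha : a ≠ 0) : (Equiv.addLeft a).support = univ := by
  ext x
  simpa using ha

/-- The fixed points of `x ↦ a - x` form a coset of the `2`-torsion, which has at most two
elements in a cyclic group. -/
theorem card_compl_support_subLeft_le_two [IsAddCyclic G] (a : G) :
    #(support (Equiv.subLeft a))ᶜ ≤ 2 := by
  have hfix : ∀ x, x ∈ (support (Equiv.subLeft a))ᶜ ↔ a = x + x := by
    simp [sub_eq_iff_eq_add]
  obtain hempty | ⟨x₀, hx₀⟩ := (support (Equiv.subLeft a))ᶜ.eq_empty_or_nonempty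
  · simp [hempty]
  calc #(support (Equiv.subLeft a))ᶜ ≤ #{y : G | 2 • y = 0} := by
        refine card_le_card_of_injOn (· - x₀) (fun x hx => ?_) (fun x _ y _ h => sub_left_inj.mp h)
        have h₀ := (hfix x₀).1 hx₀
        have h := (hfix x).1 hx
        simp only [coe_filter, mem_univ, true_and, Set.mem_ofPred_eq, two_nsmul]
        rw [← sub_eq_zero.2 (h.symm.trans h₀)]
        abel
    _ ≤ 2 := IsAddCyclic.card_nsmul_eq_zero_le two_pos

end AddCommGroup

theorem ZMod.isCycle_addLeft_one {n : ℕ} [Nontrivial (ZMod n)] :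
    (Equiv.addLeft (1 : ZMod n)).IsCycle := by
  refine ⟨0, by simp, fun y _ => ?_⟩
  obtain ⟨k, rfl⟩ := ZMod.intCast_surjective y
  exact ⟨k, by simp [zsmul_addLeft]⟩

section Involutions

variable {α : Type*} [Fintype α] [DecidableEq α]

theorem a2_conj (g σ : Perm α) : a2 (g * σ * g⁻¹) = a2 σ := by
  rw [a2, a2, support_conj, card_map]

theorem a2_extendDomain {β : Type*} [Fintype β] [DecidableEq β] {p : α → Prop} [DecidablePred p]
    (f : β ≃ Subtype p) (σ : Perm β) : a2 (σ.extendDomain f) = a2 σ := by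
  rw [a2, a2, support_extend_domain, card_map]

theorem a2_mul_of_disjoint {σ τ : Perm α} (hd : σ.Disjoint τ) (hσ : σ ^ 2 = 1) :
    a2 (σ * τ) = a2 σ + a2 τ := by
  have := two_dvd_card_support hσ
  rw [a2, a2, a2, hd.card_support_mul]
  omega

theorem a2_le_a2_add_one (σ : Perm α) {τ : Perm α} (hτ : #τ.supportᶜ ≤ 2) :
    a2 σ ≤ a2 τ + 1 := by
  have := card_le_univ σ.support
  have := card_compl τ.support
  rw [a2, a2]
  omega

theorem sign_eq_neg_one_pow_a2 {σ : Perm α} (hσ : σ ^ 2 = 1) : sign σ = (-1) ^ a2 σ := by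
  rw [sign_of_pow_two_eq_one hσ, card_fixedPoints, sum_cycleType,
    Nat.sub_sub_self (card_le_univ _), a2]

structure IsInvolutionFactorization (π σ υ : Perm α) : Prop where
  sq_left : σ ^ 2 = 1
  sq_right : υ ^ 2 = 1
  eq_mul : π = σ * υ
  support_left : σ.support ⊆ π.support
  support_right : υ.support ⊆ π.support

namespace IsInvolutionFactorization

variable {π σ υ : Perm α}

theorem one : IsInvolutionFactorization (1 : Perm α) 1 1 :=
  ⟨one_pow 2, one_pow 2, (mul_one 1).symm, subset_rfl, subset_rfl⟩

theorem subLeft {G : Type*} [AddCommGroup G] [Fintype G] [DecidableEq G] {a b : G} (hab : a ≠ b) :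
    IsInvolutionFactorization (Equiv.addLeft (a - b)) (Equiv.subLeft a) (Equiv.subLeft b) where
  sq_left := by ext x; simp [sq]
  sq_right := by ext x; simp [sq]
  eq_mul := by
    ext x
    simp only [coe_addLeft, Perm.coe_mul, Function.comp_apply, subLeft_apply]
    abel
  support_left := support_addLeft (sub_ne_zero.2 hab) ▸ subset_univ _
  support_right := support_addLeft (sub_ne_zero.2 hab) ▸ subset_univ _

theorem conj (h : IsInvolutionFactorization π σ υ) (g : Perm α) :
    IsInvolutionFactorization (g * π * g⁻¹) (g * σ * g⁻¹) (g * υ * g⁻¹) where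
  sq_left := by rw [conj_pow, h.sq_left, mul_one, mul_inv_cancel]
  sq_right := by rw [conj_pow, h.sq_right, mul_one, mul_inv_cancel]
  eq_mul := by rw [h.eq_mul]; group
  support_left := by rw [support_conj, support_conj]; exact map_subset_map.2 h.support_left
  support_right := by rw [support_conj, support_conj]; exact map_subset_map.2 h.support_right

theorem extendDomain {β : Type*} [Fintype β] [DecidableEq β] {p : α → Prop} [DecidablePred p]
    {π σ υ : Perm β} (h : IsInvolutionFactorization π σ υ) (f : β ≃ Subtype p) :
    IsInvolutionFactorization (π.extendDomain f) (σ.extendDomain f) (υ.extendDomain f) where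
  sq_left := by rw [← extendDomain_pow, h.sq_left, extendDomain_one]
  sq_right := by rw [← extendDomain_pow, h.sq_right, extendDomain_one]
  eq_mul := by rw [extendDomain_mul, h.eq_mul]
  support_left := by
    rw [support_extend_domain, support_extend_domain]; exact map_subset_map.2 h.support_left
  support_right := by
    rw [support_extend_domain, support_extend_domain]; exact map_subset_map.2 h.support_right

theorem swap (h : IsInvolutionFactorization π σ υ) :
    IsInvolutionFactorization π (σ * υ * σ⁻¹) σ where
  sq_left := by rw [conj_pow, h.sq_right, mul_one, mul_inv_cancel]
  sq_right := h.sq_left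
  eq_mul := by rw [h.eq_mul]; group
  support_left := by
    rw [← h.eq_mul]
    refine (support_mul_le _ _).trans (union_subset subset_rfl ?_)
    rw [support_inv]
    exact h.support_left
  support_right := h.support_left

theorem mul {f g σ₁ υ₁ σ₂ υ₂ : Perm α} (hd : f.Disjoint g) (h₁ : IsInvolutionFactorization f σ₁ υ₁)
    (h₂ : IsInvolutionFactorization g σ₂ υ₂) :
    IsInvolutionFactorization (f * g) (σ₁ * σ₂) (υ₁ * υ₂) where
  sq_left := by
    rw [(hd.mono h₁.support_left h₂.support_left).commute.mul_pow, h₁.sq_left, h₂.sq_left, one_mul]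
  sq_right := by
    rw [(hd.mono h₁.support_right h₂.support_right).commute.mul_pow, h₁.sq_right, h₂.sq_right,
      one_mul]
  eq_mul := by
    rw [h₁.eq_mul, h₂.eq_mul, mul_assoc, ← mul_assoc υ₁,
      (hd.mono h₁.support_right h₂.support_left).commute.eq, mul_assoc, mul_assoc]
  support_left := by
    rw [hd.support_mul]
    exact (support_mul_le _ _).trans (union_subset_union h₁.support_left h₂.support_left)
  support_right := by
    rw [hd.support_mul]
    exact (support_mul_le _ _).trans (union_subset_union h₁.support_right h₂.support_right)

end IsInvolutionFactorization

theorem exists_isInvolutionFactorization_of_isCycle {c : Perm α} (hc : c.IsCycle) :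
    ∃ σ υ, IsInvolutionFactorization c σ υ ∧ a2 σ ≤ a2 υ + 1 ∧ a2 υ ≤ a2 σ + 1 := by
  set n := #c.support
  have hn : 2 ≤ n := two_le_card_support_of_ne_one hc.ne_one
  have : NeZero n := ⟨by omega⟩
  have : Nontrivial (ZMod n) := ZMod.nontrivial_iff.2 (by omega)
  let e : ZMod n ≃ c.support := Fintype.equivOfCardEq (by rw [ZMod.card, Fintype.card_coe])
  obtain ⟨g, hg⟩ := isConj_iff.1 <| (ZMod.isCycle_addLeft_one.extendDomain e).isConj hc <| by
    rw [support_extend_domain, card_map, support_addLeft one_ne_zero, card_univ, ZMod.card]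
  have hmodel := IsInvolutionFactorization.subLeft (one_ne_zero (α := ZMod n))
  rw [sub_zero] at hmodel
  refine ⟨_, _, hg ▸ (hmodel.extendDomain e).conj g, ?_⟩
  simp only [a2_conj, a2_extendDomain]
  exact ⟨a2_le_a2_add_one _ (card_compl_support_subLeft_le_two 0),
    a2_le_a2_add_one _ (card_compl_support_subLeft_le_two 1)⟩

theorem exists_isInvolutionFactorization_a2_le (π : Perm α) :
    ∃ σ υ, IsInvolutionFactorization π σ υ ∧ a2 σ ≤ a2 υ + 1 ∧ a2 υ ≤ a2 σ + 1 := by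
  induction π using cycle_induction_on with
  | base_one => exact ⟨1, 1, .one, by simp [a2]⟩
  | base_cycles c hc => exact exists_isInvolutionFactorization_of_isCycle hc
  | induction_disjoint f g hd _ hf hg =>
    obtain ⟨σ₁, υ₁, h₁, hb₁⟩ := hf
    obtain ⟨σ₂, υ₂, h₂, hb₂⟩ := hg
    have ha2 {σ υ : Perm α} (h : IsInvolutionFactorization g σ υ) :
        a2 (σ₁ * σ) = a2 σ₁ + a2 σ ∧ a2 (υ₁ * υ) = a2 υ₁ + a2 υ :=
      ⟨a2_mul_of_disjoint (hd.mono h₁.support_left h.support_left) h₁.sq_left,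
        a2_mul_of_disjoint (hd.mono h₁.support_right h.support_right) h₁.sq_right⟩
    -- If both imbalances have the same sign, exchanging the factors of `g` makes them cancel.
    by_cases hbal : a2 σ₁ + a2 σ₂ ≤ a2 υ₁ + a2 υ₂ + 1 ∧ a2 υ₁ + a2 υ₂ ≤ a2 σ₁ + a2 σ₂ + 1
    · refine ⟨_, _, h₁.mul hd h₂, ?_⟩
      rwa [(ha2 h₂).1, (ha2 h₂).2]
    · refine ⟨_, _, h₁.mul hd h₂.swap, ?_⟩
      rw [(ha2 h₂.swap).1, (ha2 h₂.swap).2, a2_conj]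
      omega

end Involutions

theorem even_perm_eq_prod_two_involutions {α : Type*} [Fintype α] [DecidableEq α]
    (π : Equiv.Perm α) (h : Equiv.Perm.sign π = 1) :
    ∃ σ υ : Equiv.Perm α, σ * σ = 1 ∧ υ * υ = 1 ∧ π = σ * υ ∧ a2 σ = a2 υ := by
  obtain ⟨σ, υ, hf, hσυ, hυσ⟩ := exists_isInvolutionFactorization_a2_le π
  have heven : Even (a2 σ + a2 υ) := by
    rwa [← neg_one_pow_eq_one_iff_even (R := ℤˣ) (by decide), pow_add,
      ← sign_eq_neg_one_pow_a2 hf.sq_left, ← sign_eq_neg_one_pow_a2 hf.sq_right, ← map_mul,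
      ← hf.eq_mul]
  obtain ⟨k, hk⟩ := heven
  exact ⟨σ, υ, (sq σ).symm.trans hf.sq_left, (sq υ).symm.trans hf.sq_right, hf.eq_mul, by omega⟩
end

section
/- Let π be an odd permutation of a finite type (i.e., its sign is −1). Then there exist involutions σ and υ and a transposition τ (a permutation that is a swap of two distinct elements) such that π = σ · υ · τ and a₂(σ) = a₂(υ). -/
open Finset Equiv Equiv.Perm

lemma zmod_count0_even {n : ℕ} [NeZero n] (hn : 2 ≤ n) (he : Even n) :
    (Finset.univ.filter fun k : ZMod n => -k = k).card = 2 := by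
  have h2 : n / 2 < n := by omega
  have hval : ((n / 2 : ℕ) : ZMod n).val = n / 2 := ZMod.val_cast_of_lt h2
  have hmul : 2 * (n / 2) = n := by obtain ⟨m, rfl⟩ := he; omega
  have heq : (Finset.univ.filter fun k : ZMod n => -k = k) = {0, ((n / 2 : ℕ) : ZMod n)} := by
    ext k
    simp only [mem_filter, mem_univ, true_and, ZMod.neg_eq_self_iff, mem_insert, mem_singleton]
    constructor
    · rintro (rfl | h)
      · left; rfl
      · right
        have : k.val = n / 2 := by omega
        rw [← ZMod.natCast_zmod_val k, this]
    · rintro (rfl | rfl)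
      · left; rfl
      · right; rw [hval]; exact hmul
  rw [heq, card_insert_of_notMem, card_singleton]
  simp only [mem_singleton]
  intro h
  have := congrArg ZMod.val h
  rw [ZMod.val_zero, hval] at this
  omega

lemma zmod_count0_odd {n : ℕ} [NeZero n] (ho : Odd n) :
    (Finset.univ.filter fun k : ZMod n => -k = k).card = 1 := by
  have heq : (Finset.univ.filter fun k : ZMod n => -k = k) = {0} := by
    ext k
    simp only [mem_filter, mem_univ, true_and, ZMod.neg_eq_self_iff, mem_singleton]
    constructor
    · rintro (rfl | h)
      · rfl
      · exfalso; obtain ⟨m, hm⟩ := ho; omega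
    · rintro rfl; left; rfl
  rw [heq, card_singleton]

lemma zmod_count1_even {n : ℕ} [NeZero n] (he : Even n) :
    (Finset.univ.filter fun k : ZMod n => 1 - k = k).card = 0 := by
  rw [Finset.card_eq_zero, Finset.filter_eq_empty_iff]
  intro k _ h
  have h1 : (1 : ZMod n) = k + k := sub_eq_iff_eq_add.mp h
  have hdvd : (2 : ℕ) ∣ n := by obtain ⟨m, rfl⟩ := he; omega
  have := congrArg (ZMod.castHom hdvd (ZMod 2)) h1
  simp only [map_one, map_add] at this
  rw [CharTwo.add_self_eq_zero] at this
  exact one_ne_zero this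

lemma zmod_count1_odd {n : ℕ} [NeZero n] (ho : Odd n) :
    (Finset.univ.filter fun k : ZMod n => 1 - k = k).card = 1 := by
  have hcop : Nat.Coprime 2 n :=
    (Nat.prime_two.coprime_iff_not_dvd).2 (by obtain ⟨m, rfl⟩ := ho; omega)
  set u : (ZMod n)ˣ := ZMod.unitOfCoprime 2 hcop with hu
  have hu2 : (u : ZMod n) = 2 := ZMod.coe_unitOfCoprime 2 hcop
  have heq : (Finset.univ.filter fun k : ZMod n => 1 - k = k)
      = {((u⁻¹ : (ZMod n)ˣ) : ZMod n)} := by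
    ext k
    simp only [mem_filter, mem_univ, true_and, mem_singleton]
    constructor
    · intro h
      have h1 : (u : ZMod n) * k = 1 := by
        rw [hu2, two_mul]; exact (sub_eq_iff_eq_add.mp h).symm
      calc k = ↑u⁻¹ * (↑u * k) := by rw [← mul_assoc, Units.inv_mul, one_mul]
        _ = ↑u⁻¹ := by rw [h1, mul_one]
    · rintro rfl
      rw [sub_eq_iff_eq_add, ← two_mul, ← hu2, Units.mul_inv]
  rw [heq, card_singleton]

lemma cycle_decomp {α : Type*} [Fintype α] [DecidableEq α] {c : Equiv.Perm α}
    (hc : c.IsCycle) :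
    ∃ σ υ : Equiv.Perm α, σ * σ = 1 ∧ υ * υ = 1 ∧ c = σ * υ ∧
      σ.support ⊆ c.support ∧ υ.support ⊆ c.support ∧
      υ.support.card + (if Even c.support.card then 2 else 0) = σ.support.card := by
  classical
  obtain ⟨x, hcx, -⟩ := id hc
  have hx : x ∈ c.support := Equiv.Perm.mem_support.2 hcx
  have hn2 : 2 ≤ c.support.card := hc.two_le_card_support
  set n := c.support.card with hn
  haveI : NeZero n := ⟨by omega⟩
  have hco : c.IsCycleOn (c.support : Set α) := by
    rw [Equiv.Perm.coe_support_eq_set_support]; exact hc.isCycleOn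
  set m : ZMod n → α := fun k => (c ^ k.val) x with hm
  have key : ∀ a b : ℕ, (c ^ a) x = (c ^ b) x ↔ (a : ZMod n) = (b : ZMod n) := by
    intro a b
    rw [hco.pow_apply_eq_pow_apply hx, ZMod.natCast_eq_natCast_iff]
  have m_nat : ∀ a : ℕ, m (a : ZMod n) = (c ^ a) x := by
    intro a
    show (c ^ ((a : ZMod n)).val) x = (c ^ a) x
    rw [key, ZMod.natCast_zmod_val]
  have m_inj : Function.Injective m := by
    intro a b hab
    have h2 := (key a.val b.val).1 hab
    rwa [ZMod.natCast_zmod_val, ZMod.natCast_zmod_val] at h2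
  have m_mem : ∀ k, m k ∈ c.support := fun k => Equiv.Perm.pow_apply_mem_support.2 hx
  have m_surj : ∀ y ∈ c.support, ∃ k, m k = y := by
    intro y hy
    obtain ⟨j, _, hjy⟩ := hco.exists_pow_eq hx hy
    exact ⟨j, by rw [m_nat]; exact hjy⟩
  have m_succ : ∀ k : ZMod n, m (k + 1) = c (m k) := by
    intro k
    have h1 : ((k.val + 1 : ℕ) : ZMod n) = k + 1 := by
      push_cast [ZMod.natCast_zmod_val]; ring
    rw [← h1, m_nat, pow_succ']
    rfl
  set idx : α → ZMod n := fun y => if h : ∃ k, m k = y then h.choose else 0 with hidx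
  have idx_m : ∀ k, idx (m k) = k := by
    intro k
    have h : ∃ k', m k' = m k := ⟨k, rfl⟩
    apply m_inj
    show m (dite _ _ _) = m k
    rw [dif_pos h]
    exact h.choose_spec
  have m_idx : ∀ y ∈ c.support, m (idx y) = y := by
    intro y hy; obtain ⟨k, rfl⟩ := m_surj y hy; rw [idx_m]
  set sf : α → α := fun y => if y ∈ c.support then m (1 - idx y) else y with hsf
  set uf : α → α := fun y => if y ∈ c.support then m (- idx y) else y with huf
  have sf_invol : Function.Involutive sf := by
    intro y
    by_cases hy : y ∈ c.support
    · simp only [hsf, if_pos hy, if_pos (m_mem _), idx_m, sub_sub_cancel]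
      exact m_idx y hy
    · simp only [hsf, if_neg hy]
  have uf_invol : Function.Involutive uf := by
    intro y
    by_cases hy : y ∈ c.support
    · simp only [huf, if_pos hy, if_pos (m_mem _), idx_m, neg_neg]
      exact m_idx y hy
    · simp only [huf, if_neg hy]
  refine ⟨sf_invol.toPerm sf, uf_invol.toPerm uf, ?_, ?_, ?_, ?_, ?_, ?_⟩
  · ext y
    simp only [Equiv.Perm.mul_apply, Function.Involutive.coe_toPerm, Equiv.Perm.one_apply]
    exact sf_invol y
  · ext y
    simp only [Equiv.Perm.mul_apply, Function.Involutive.coe_toPerm, Equiv.Perm.one_apply]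
    exact uf_invol y
  · ext y
    simp only [Equiv.Perm.mul_apply, Function.Involutive.coe_toPerm]
    by_cases hy : y ∈ c.support
    · simp only [huf, if_pos hy, hsf, if_pos (m_mem _), idx_m]
      have h1 : (1 : ZMod n) - -idx y = idx y + 1 := by ring
      rw [h1, m_succ, m_idx y hy]
    · simp only [huf, if_neg hy, hsf]
      exact Equiv.Perm.notMem_support.1 hy
  · intro y hy
    rw [Equiv.Perm.mem_support, Function.Involutive.coe_toPerm] at hy
    by_contra h
    apply hy
    simp only [hsf, if_neg h]
  · intro y hy
    rw [Equiv.Perm.mem_support, Function.Involutive.coe_toPerm] at hy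
    by_contra h
    apply hy
    simp only [huf, if_neg h]
  · -- cardinalities
    have hsupσ : (sf_invol.toPerm sf).support
        = (Finset.univ.filter (fun k : ZMod n => ¬ (1 - k = k))).image m := by
      ext y
      simp only [Equiv.Perm.mem_support, Function.Involutive.coe_toPerm, Finset.mem_image,
        Finset.mem_filter, Finset.mem_univ, true_and]
      constructor
      · intro h
        have hy : y ∈ c.support := by
          by_contra hy
          apply h; simp only [hsf, if_neg hy]
        refine ⟨idx y, ?_, m_idx y hy⟩
        intro h'
        apply h
        simp only [hsf, if_pos hy]
        rw [h']; exact m_idx y hy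
      · rintro ⟨k, hk, rfl⟩
        intro h'
        simp only [hsf, if_pos (m_mem k), idx_m] at h'
        exact hk (m_inj h')
    have hsupυ : (uf_invol.toPerm uf).support
        = (Finset.univ.filter (fun k : ZMod n => ¬ (- k = k))).image m := by
      ext y
      simp only [Equiv.Perm.mem_support, Function.Involutive.coe_toPerm, Finset.mem_image,
        Finset.mem_filter, Finset.mem_univ, true_and]
      constructor
      · intro h
        have hy : y ∈ c.support := by
          by_contra hy
          apply h; simp only [huf, if_neg hy]
        refine ⟨idx y, ?_, m_idx y hy⟩
        intro h'
        apply h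
        simp only [huf, if_pos hy]
        rw [h']; exact m_idx y hy
      · rintro ⟨k, hk, rfl⟩
        intro h'
        simp only [huf, if_pos (m_mem k), idx_m] at h'
        exact hk (m_inj h')
    have hσc : (sf_invol.toPerm sf).support.card
        = n - (Finset.univ.filter fun k : ZMod n => 1 - k = k).card := by
      rw [hsupσ, Finset.card_image_of_injective _ m_inj]
      have h := Finset.card_filter_add_card_filter_not
        (s := (Finset.univ : Finset (ZMod n))) (fun k : ZMod n => 1 - k = k)
      rw [Finset.card_univ, ZMod.card] at h
      omega
    have hυc : (uf_invol.toPerm uf).support.card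
        = n - (Finset.univ.filter fun k : ZMod n => - k = k).card := by
      rw [hsupυ, Finset.card_image_of_injective _ m_inj]
      have h := Finset.card_filter_add_card_filter_not
        (s := (Finset.univ : Finset (ZMod n))) (fun k : ZMod n => - k = k)
      rw [Finset.card_univ, ZMod.card] at h
      omega
    rw [hσc, hυc]
    by_cases he : Even n
    · rw [if_pos he, zmod_count0_even hn2 he, zmod_count1_even he]
      omega
    · rw [if_neg he, zmod_count0_odd (Nat.not_even_iff_odd.1 he),
        zmod_count1_odd (Nat.not_even_iff_odd.1 he)]
      omega

lemma mul_invol {α : Type*} {a b : Equiv.Perm α} (ha : a * a = 1) (hb : b * b = 1)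
    (hab : Commute a b) : (a * b) * (a * b) = 1 := by
  calc a * b * (a * b) = a * (b * a) * b := by simp only [mul_assoc]
    _ = a * (a * b) * b := by rw [hab.eq]
    _ = (a * a) * (b * b) := by simp only [mul_assoc]
    _ = 1 := by rw [ha, hb, one_mul]

/-- flip a two-involution factorization -/
lemma flip_decomp {α : Type*} [Fintype α] [DecidableEq α] {c σ υ : Equiv.Perm α}
    (hσ : σ * σ = 1) (hυ : υ * υ = 1) (hc : c = σ * υ) :
    ∃ σ' : Equiv.Perm α, σ' * σ' = 1 ∧ c = σ' * σ ∧
      σ'.support.card = υ.support.card ∧ σ'.support ⊆ σ.support ∪ υ.support := by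
  have hσinv : σ⁻¹ = σ := inv_eq_of_mul_eq_one_left hσ
  refine ⟨σ * υ * σ⁻¹, ?_, ?_, ?_, ?_⟩
  · rw [hσinv]
    calc σ * υ * σ * (σ * υ * σ) = σ * υ * (σ * σ) * υ * σ := by simp only [mul_assoc]
      _ = σ * (υ * υ) * σ := by rw [hσ]; simp only [mul_one, mul_assoc]
      _ = 1 := by rw [hυ, mul_one, hσ]
  · rw [hσinv, hc]
    calc σ * υ = σ * υ * (σ * σ) := by rw [hσ, mul_one]
      _ = σ * υ * σ * σ := by simp only [mul_assoc]
  · exact Equiv.Perm.card_support_conj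
  · rw [Equiv.Perm.support_conj]
    intro y hy
    simp only [Finset.mem_map, Equiv.toEmbedding_apply] at hy
    obtain ⟨z, hz, rfl⟩ := hy
    by_cases hzσ : z ∈ σ.support
    · exact Finset.mem_union_left _ (Equiv.Perm.apply_mem_support.2 hzσ)
    · rw [Equiv.Perm.notMem_support.1 hzσ]
      exact Finset.mem_union_right _ hz

lemma perm_two_involutions {α : Type*} [Fintype α] [DecidableEq α] (π : Equiv.Perm α) :
    ∃ σ υ : Equiv.Perm α, σ * σ = 1 ∧ υ * υ = 1 ∧ π = σ * υ ∧
      σ.support ⊆ π.support ∧ υ.support ⊆ π.support ∧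
      υ.support.card + (if Equiv.Perm.sign π = 1 then 0 else 2) = σ.support.card := by
  induction π using Equiv.Perm.cycle_induction_on with
  | base_one =>
    exact ⟨1, 1, by simp, by simp, by simp, by simp, by simp, by simp⟩
  | base_cycles c hc =>
    obtain ⟨σ, υ, hσ, hυ, hcσυ, hs, hu, hcard⟩ := cycle_decomp hc
    refine ⟨σ, υ, hσ, hυ, hcσυ, hs, hu, ?_⟩
    rw [hc.sign]
    by_cases he : Even c.support.card
    · rw [if_pos he] at hcard
      rw [Even.neg_one_pow he]
      simpa using hcard
    · rw [if_neg he] at hcard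
      rw [Odd.neg_one_pow (Nat.not_even_iff_odd.1 he)]
      simpa using hcard
  | induction_disjoint c ρ hd hc ihc ihρ =>
    obtain ⟨σ₁, υ₁, hσ₁, hυ₁, h₁, hs₁, hu₁, hcard₁⟩ := ihc
    obtain ⟨σ₂, υ₂, hσ₂, hυ₂, h₂, hs₂, hu₂, hcard₂⟩ := ihρ
    have hds : Disjoint c.support ρ.support := Equiv.Perm.disjoint_iff_disjoint_support.1 hd
    have hdis : ∀ a b : Equiv.Perm α, a.support ⊆ c.support → b.support ⊆ ρ.support →
        a.Disjoint b := fun a b ha hb =>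
      Equiv.Perm.disjoint_iff_disjoint_support.2 (hds.mono ha hb)
    have hsupmul : (c * ρ).support = c.support ∪ ρ.support := hd.support_mul
    have hsgn : Equiv.Perm.sign (c * ρ) = Equiv.Perm.sign c * Equiv.Perm.sign ρ := by
      rw [map_mul]
    -- combination helper
    have combine : ∀ a₁ b₁ a₂ b₂ : Equiv.Perm α,
        a₁ * a₁ = 1 → b₁ * b₁ = 1 → a₂ * a₂ = 1 → b₂ * b₂ = 1 →
        c = a₁ * b₁ → ρ = a₂ * b₂ →
        a₁.support ⊆ c.support → b₁.support ⊆ c.support →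
        a₂.support ⊆ ρ.support → b₂.support ⊆ ρ.support →
        ∃ σ υ : Equiv.Perm α, σ * σ = 1 ∧ υ * υ = 1 ∧ c * ρ = σ * υ ∧
          σ.support ⊆ (c * ρ).support ∧ υ.support ⊆ (c * ρ).support ∧
          σ.support.card = a₁.support.card + a₂.support.card ∧
          υ.support.card = b₁.support.card + b₂.support.card := by
      intro a₁ b₁ a₂ b₂ ha₁ hb₁ ha₂ hb₂ hc1 hc2 hsa₁ hsb₁ hsa₂ hsb₂
      have hd_a : a₁.Disjoint a₂ := hdis _ _ hsa₁ hsa₂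
      have hd_b : b₁.Disjoint b₂ := hdis _ _ hsb₁ hsb₂
      have hd_ba : b₁.Disjoint a₂ := hdis _ _ hsb₁ hsa₂
      refine ⟨a₁ * a₂, b₁ * b₂, mul_invol ha₁ ha₂ hd_a.commute,
        mul_invol hb₁ hb₂ hd_b.commute, ?_, ?_, ?_, ?_, ?_⟩
      · rw [hc1, hc2]
        calc a₁ * b₁ * (a₂ * b₂) = a₁ * (b₁ * a₂) * b₂ := by simp only [mul_assoc]
          _ = a₁ * (a₂ * b₁) * b₂ := by rw [hd_ba.commute.eq]
          _ = a₁ * a₂ * (b₁ * b₂) := by simp only [mul_assoc]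
      · rw [hsupmul]
        refine subset_trans (Equiv.Perm.support_mul_le _ _) ?_
        exact Finset.union_subset_union hsa₁ hsa₂
      · rw [hsupmul]
        refine subset_trans (Equiv.Perm.support_mul_le _ _) ?_
        exact Finset.union_subset_union hsb₁ hsb₂
      · rw [hd_a.support_mul]
        exact Finset.card_union_of_disjoint (hds.mono hsa₁ hsa₂)
      · rw [hd_b.support_mul]
        exact Finset.card_union_of_disjoint (hds.mono hsb₁ hsb₂)
    rcases Int.units_eq_one_or (Equiv.Perm.sign c) with hsc | hsc <;>
      rcases Int.units_eq_one_or (Equiv.Perm.sign ρ) with hsρ | hsρ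
    · -- both even: diff 0 + 0
      rw [hsc, if_pos rfl] at hcard₁
      rw [hsρ, if_pos rfl] at hcard₂
      obtain ⟨σ, υ, h1, h2, h3, h4, h5, h6, h7⟩ :=
        combine σ₁ υ₁ σ₂ υ₂ hσ₁ hυ₁ hσ₂ hυ₂ h₁ h₂ hs₁ hu₁ hs₂ hu₂
      refine ⟨σ, υ, h1, h2, h3, h4, h5, ?_⟩
      rw [hsgn, hsc, hsρ, one_mul, if_pos rfl]
      omega
    · rw [hsc, if_pos rfl] at hcard₁
      rw [hsρ, if_neg (by decide)] at hcard₂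
      obtain ⟨σ, υ, h1, h2, h3, h4, h5, h6, h7⟩ :=
        combine σ₁ υ₁ σ₂ υ₂ hσ₁ hυ₁ hσ₂ hυ₂ h₁ h₂ hs₁ hu₁ hs₂ hu₂
      refine ⟨σ, υ, h1, h2, h3, h4, h5, ?_⟩
      rw [hsgn, hsc, hsρ, one_mul, if_neg (by decide)]
      omega
    · rw [hsc, if_neg (by decide)] at hcard₁
      rw [hsρ, if_pos rfl] at hcard₂
      obtain ⟨σ, υ, h1, h2, h3, h4, h5, h6, h7⟩ :=
        combine σ₁ υ₁ σ₂ υ₂ hσ₁ hυ₁ hσ₂ hυ₂ h₁ h₂ hs₁ hu₁ hs₂ hu₂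
      refine ⟨σ, υ, h1, h2, h3, h4, h5, ?_⟩
      rw [hsgn, hsc, hsρ, mul_one, if_neg (by decide)]
      omega
    · -- both odd: flip the cycle factorization
      rw [hsc, if_neg (by decide)] at hcard₁
      rw [hsρ, if_neg (by decide)] at hcard₂
      obtain ⟨σ₁', hσ₁', h₁', hcard₁', hsub₁'⟩ := flip_decomp hσ₁ hυ₁ h₁
      have hs₁' : σ₁'.support ⊆ c.support :=
        subset_trans hsub₁' (Finset.union_subset hs₁ hu₁)
      obtain ⟨σ, υ, h1, h2, h3, h4, h5, h6, h7⟩ :=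
        combine σ₁' σ₁ σ₂ υ₂ hσ₁' hσ₁ hσ₂ hυ₂ h₁' h₂ hs₁' hs₁ hs₂ hu₂
      refine ⟨σ, υ, h1, h2, h3, h4, h5, ?_⟩
      rw [hsgn, hsc, hsρ, if_pos (by decide)]
      omega



/- Every odd permutation is the product of two involutions with equally many
transpositions, followed by one transposition. -/
theorem odd_perm_eq_prod_two_involutions_and_swap {α : Type*} [Fintype α] [DecidableEq α]
    (π : Equiv.Perm α) (h : Equiv.Perm.sign π = -1) :
    ∃ σ υ τ : Equiv.Perm α, σ * σ = 1 ∧ υ * υ = 1 ∧ τ.IsSwap ∧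
      π = σ * υ * τ ∧ a2 σ = a2 υ := by
  classical
  obtain ⟨σ, υ, hσ, hυ, hπ, -, -, hcard⟩ := perm_two_involutions π
  rw [h, if_neg (by decide)] at hcard
  have hpos : 0 < σ.support.card := by omega
  obtain ⟨x, hx⟩ := Finset.card_pos.1 hpos
  have hxσ : σ x ≠ x := Equiv.Perm.mem_support.1 hx
  set τ := Equiv.swap x (σ x) with hτdef
  have hτ : τ * τ = 1 := Equiv.swap_mul_self x (σ x)
  have hτinv : τ⁻¹ = τ := inv_eq_of_mul_eq_one_left hτ
  have hσσx : σ (σ x) = x := by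
    have h1 : (σ * σ) x = x := by rw [hσ]; rfl
    rwa [Equiv.Perm.mul_apply] at h1
  have hcomm : Commute σ τ := by
    have h1 : Equiv.swap (σ x) (σ (σ x)) = σ * Equiv.swap x (σ x) * σ⁻¹ :=
      Equiv.swap_apply_apply σ x (σ x)
    rw [hσσx, Equiv.swap_comm] at h1
    show σ * τ = τ * σ
    have h2 : σ * Equiv.swap x (σ x) * σ⁻¹ * σ = Equiv.swap x (σ x) * σ := by rw [← h1]
    rw [mul_assoc (σ * Equiv.swap x (σ x)), inv_mul_cancel, mul_one] at h2
    rw [hτdef, h2, h1]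
  have hσ' : (σ * τ) * (σ * τ) = 1 := mul_invol hσ hτ hcomm
  have hυ' : (τ * υ * τ) * (τ * υ * τ) = 1 := by
    calc τ * υ * τ * (τ * υ * τ) = τ * υ * (τ * τ) * υ * τ := by simp only [mul_assoc]
      _ = τ * (υ * υ) * τ := by rw [hτ]; simp only [mul_one, mul_assoc]
      _ = 1 := by rw [hυ, mul_one, hτ]
  have hfact : π = (σ * τ) * (τ * υ * τ) * τ := by
    calc π = σ * υ := hπ
      _ = σ * (τ * τ) * υ * (τ * τ) := by rw [hτ]; simp only [mul_one]
      _ = (σ * τ) * (τ * υ * τ) * τ := by simp only [mul_assoc]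
  have hss : (σ * τ).support = σ.support \ {x, σ x} := by
    ext y
    simp only [Equiv.Perm.mem_support, Finset.mem_sdiff, Finset.mem_insert,
      Finset.mem_singleton, Equiv.Perm.mul_apply]
    by_cases h1 : y = x
    · subst h1
      simp only [hτdef, Equiv.swap_apply_left, hσσx]
      simp [hxσ]
    · by_cases h2 : y = σ x
      · subst h2
        simp only [hτdef, Equiv.swap_apply_right]
        simp
      · rw [hτdef, Equiv.swap_apply_of_ne_of_ne h1 h2]
        simp [h1, h2]
  have hpair : ({x, σ x} : Finset α) ⊆ σ.support := by
    intro y hy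
    simp only [Finset.mem_insert, Finset.mem_singleton] at hy
    rcases hy with rfl | rfl
    · exact hx
    · exact Equiv.Perm.apply_mem_support.2 hx
  have hpaircard : ({x, σ x} : Finset α).card = 2 := by
    rw [Finset.card_insert_of_notMem (by simpa using Ne.symm hxσ), Finset.card_singleton]
  have hσ'card : (σ * τ).support.card = υ.support.card := by
    rw [hss, Finset.card_sdiff_of_subset hpair, hpaircard]
    omega
  have hυ'card : (τ * υ * τ).support.card = υ.support.card := by
    conv_lhs => rw [show τ * υ * τ = τ * υ * τ⁻¹ from by rw [hτinv]]
    exact Equiv.Perm.card_support_conj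
  refine ⟨σ * τ, τ * υ * τ, τ, hσ', hυ', ⟨x, σ x, Ne.symm hxσ, rfl⟩, hfact, ?_⟩
  unfold a2
  rw [hσ'card, hυ'card]
end

section
/- Let m, n be integers with 2 ≤ m ≤ n, and let T be any subset of S(m,n) (the set of the m + n unit rotations) with |T| ≤ m. Then the subgroup of the symmetric group on Fin m × Fin n generated by T does not act transitively on Fin m × Fin n; in particular, m unit rotation types do not suffice to sort every sortable m × n instance, so the m + 1 rotation types used by the sorting algorithm are optimal in number. -/
open Equiv Function

section Closure

variable {α β : Type*} {S : Set (Perm α)}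

theorem apply_eq_of_mem_closure_of_forall_apply_eq {f : α → β}
    (hS : ∀ s ∈ S, ∀ x, f (s x) = f x) {g : Perm α} (hg : g ∈ Subgroup.closure S) (x : α) :
    f (g x) = f x := by
  induction hg using Subgroup.closure_induction generalizing x with
  | mem s hs => exact hS s hs x
  | one => rfl
  | mul a b _ _ ha hb => rw [Perm.mul_apply, ha, hb]
  | inv a _ ha => simpa using (ha (a⁻¹ x)).symm

theorem not_transitive_closure_of_invariant {f : α → β} (hS : ∀ s ∈ S, ∀ x, f (s x) = f x)
    {p q : α} (hpq : f p ≠ f q) : ¬ ∀ p q : α, ∃ g ∈ Subgroup.closure S, g p = q := by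
  intro htrans
  obtain ⟨g, hg, rfl⟩ := htrans p q
  exact hpq (apply_eq_of_mem_closure_of_forall_apply_eq hS hg p).symm

theorem not_transitive_closure_of_fixed {x y : α} (hS : ∀ s ∈ S, s x = x) (hxy : x ≠ y) :
    ¬ ∀ p q : α, ∃ g ∈ Subgroup.closure S, g p = q := by
  intro htrans
  obtain ⟨g, hg, rfl⟩ := htrans x y
  exact hxy ((Subgroup.closure_le (MulAction.stabilizer (Perm α) x)).2 hS hg).symm

end Closure

theorem Finset.coe_eq_range_of_range_subset_of_card_le {ι α : Type*} [Finite ι] {f : ι → α}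
    (hf : Injective f) {T : Finset α} (hT : Set.range f ⊆ T) (hcard : T.card ≤ Nat.card ι) :
    (T : Set α) = Set.range f :=
  (Set.eq_of_subset_of_ncard_le hT (by rwa [Set.ncard_coe_finset, Set.ncard_range_of_injective hf])
    T.finite_toSet).symm

theorem finRotate_apply_ne {n : ℕ} (hn : 2 ≤ n) (j : Fin n) : finRotate n j ≠ j := by
  obtain ⟨k, rfl⟩ : ∃ k, n = k + 2 := ⟨n - 2, by omega⟩
  rw [← Perm.mem_support, support_finRotate]
  exact Finset.mem_univ j

section TorusPuzzle

variable {m n : ℕ}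

theorem rowRot_apply_fst (i : Fin m) (p : Fin m × Fin n) : (rowRot m n i p).1 = p.1 := by
  simp only [rowRot, Equiv.coe_fn_mk]
  split_ifs with h <;> simp [h]

theorem colRot_apply_snd (j : Fin n) (p : Fin m × Fin n) : (colRot m n j p).2 = p.2 := by
  simp only [colRot, Equiv.coe_fn_mk]
  split_ifs with h <;> simp [h]

theorem rowRot_apply_of_fst_ne {i : Fin m} {p : Fin m × Fin n} (h : p.1 ≠ i) :
    rowRot m n i p = p := by
  simp [rowRot, h]

theorem colRot_apply_of_snd_ne {j : Fin n} {p : Fin m × Fin n} (h : p.2 ≠ j) :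
    colRot m n j p = p := by
  simp [colRot, h]

theorem rowRot_apply_mk_self (i : Fin m) (j : Fin n) :
    rowRot m n i (i, j) = (i, finRotate n j) :=
  if_pos rfl

theorem colRot_apply_mk_self (i : Fin m) (j : Fin n) :
    colRot m n j (i, j) = (finRotate m i, j) :=
  if_pos rfl

theorem rowRot_injective (hn : 2 ≤ n) : Injective (rowRot m n) := by
  intro i i' h
  by_contra hne
  let j : Fin n := ⟨0, by omega⟩
  have hfix : rowRot m n i' (i, j) = (i, j) := rowRot_apply_of_fst_ne hne
  rw [← h, rowRot_apply_mk_self] at hfix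
  exact finRotate_apply_ne hn j (congrArg Prod.snd hfix)

theorem colRot_injective (hm : 2 ≤ m) : Injective (colRot m n) := by
  intro j j' h
  by_contra hne
  let i : Fin m := ⟨0, by omega⟩
  have hfix : colRot m n j' (i, j) = (i, j) := colRot_apply_of_snd_ne hne
  rw [← h, colRot_apply_mk_self] at hfix
  exact finRotate_apply_ne hm i (congrArg Prod.fst hfix)

end TorusPuzzle

theorem m_rotation_types_not_transitive (m n : ℕ) (hm : 2 ≤ m) (hmn : m ≤ n)
    (T : Finset (Equiv.Perm (Fin m × Fin n)))
    (hT : ↑T ⊆ unitRotations m n) (hcard : T.card ≤ m) :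
    ¬ ∀ p q : Fin m × Fin n,
        ∃ g ∈ Subgroup.closure (T : Set (Equiv.Perm (Fin m × Fin n))), g p = q := by
  have hn : 2 ≤ n := hm.trans hmn
  let i : Fin m := ⟨0, by omega⟩
  let j : Fin n := ⟨0, by omega⟩
  by_cases hR : Set.range (rowRot m n) ⊆ T
  · rw [Finset.coe_eq_range_of_range_subset_of_card_le (rowRot_injective hn) hR (by simpa using hcard)]
    refine not_transitive_closure_of_invariant (f := Prod.fst) (p := (i, j))
      (q := (finRotate m i, j)) ?_ (finRotate_apply_ne hm i).symm
    rintro _ ⟨i', rfl⟩ p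
    exact rowRot_apply_fst i' p
  by_cases hC : Set.range (colRot m n) ⊆ T
  · rw [Finset.coe_eq_range_of_range_subset_of_card_le (colRot_injective hm) hC
      (by simpa using hcard.trans hmn)]
    refine not_transitive_closure_of_invariant (f := Prod.snd) (p := (i, j))
      (q := (i, finRotate n j)) ?_ (finRotate_apply_ne hn j).symm
    rintro _ ⟨j', rfl⟩ p
    exact colRot_apply_snd j' p
  obtain ⟨_, ⟨i₀, rfl⟩, hi₀⟩ := Set.not_subset.mp hR
  obtain ⟨_, ⟨j₀, rfl⟩, hj₀⟩ := Set.not_subset.mp hC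
  refine not_transitive_closure_of_fixed (x := (i₀, j₀)) (y := (finRotate m i₀, j₀)) ?_
    (fun h => finRotate_apply_ne hm i₀ (congrArg Prod.fst h).symm)
  intro t ht
  rcases hT ht with ⟨i', rfl⟩ | ⟨j', rfl⟩
  · exact rowRot_apply_of_fst_ne fun h => hi₀ (by subst h; exact ht)
  · exact colRot_apply_of_snd_ne fun h => hj₀ (by subst h; exact ht)
end
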